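/- arXiv:1011.3376 — 12 statements merged into one kernel-verified Lean document; each statement's English description precedes it below -/
import Mathlib

section
/- If A is a set of integers containing no 3-term arithmetic progression (i.e., no triple i, k, m in A with i ≠ k, m ≠ k, and i + m = 2k), then the edge-coloring of the complete graph on vertex set A that colors each edge {i, j} by the integer i + j is a star edge-coloring: it is proper, and no path with 4 edges and no 4-cycle is colored with at most two colors. -/
open SimpleGraph

/-- A star edge-coloring: proper (adjacent distinct edges get different colors),
and no path with 4 edges nor 4-cycle uses at most two colors. -/
def IsStarEdgeColoring {V α : Type*} (G : SimpleGraph V) (c : Sym2 V → α) : Prop :=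
  (∀ e₁ ∈ G.edgeSet, ∀ e₂ ∈ G.edgeSet, e₁ ≠ e₂ → (∃ v, v ∈ e₁ ∧ v ∈ e₂) → c e₁ ≠ c e₂) ∧
  (∀ (u v : V) (p : G.Walk u v), p.IsPath → p.length = 4 →
      ¬ ∃ a b : α, ∀ e ∈ p.edges, c e = a ∨ c e = b) ∧
  (∀ (u : V) (p : G.Walk u u), p.IsCycle → p.length = 4 →
      ¬ ∃ a b : α, ∀ e ∈ p.edges, c e = a ∨ c e = b)

/-- The star chromatic index. -/
noncomputable def starChromaticIndex {V : Type*} (G : SimpleGraph V) : ℕ :=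
  sInf {k | ∃ c : Sym2 V → Fin k, IsStarEdgeColoring G c}

/-- coloring edge {i,j} of the complete graph on a 3-AP-free set
A ⊆ ℤ by i + j is a star edge-coloring. -/
theorem sumColoring_isStarEdgeColoring_of_no3AP (A : Set ℤ)
    (hA : ∀ i k m : ℤ, i ∈ A → k ∈ A → m ∈ A → i ≠ k → m ≠ k → i + m ≠ 2 * k) :
    IsStarEdgeColoring (⊤ : SimpleGraph A)
      (Sym2.lift ⟨fun i j => (i : ℤ) + (j : ℤ), fun i j => by ring⟩) := by
  refine ⟨?_, ?_, ?_⟩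
  · rintro e₁ he₁ e₂ he₂ hne ⟨v, hv₁, hv₂⟩
    rw [← Sym2.other_spec hv₁, ← Sym2.other_spec hv₂] at hne ⊢
    simp only [Sym2.lift_mk]
    intro h
    exact hne (by rw [Subtype.ext (show ((Sym2.Mem.other hv₁ : A) : ℤ) = Sym2.Mem.other hv₂ by omega)])
  · rintro u v p hp hlen ⟨a, b, hab⟩
    cases p with
    | nil => simp at hlen
    | cons h01 p =>
    cases p with
    | nil => simp at hlen
    | cons h12 p =>
    cases p with
    | nil => simp at hlen
    | cons h23 p =>
    cases p with
    | nil => simp at hlen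
    | cons h34 p =>
    cases p with
    | cons h45 p => simp at hlen
    | nil =>
      rename_i v1 v2 v3
      have hnd := hp.support_nodup
      simp [List.nodup_cons] at hnd
      have h0 := hab s(u, v1) (by simp)
      have h1 := hab s(v1, v2) (by simp)
      have h2 := hab s(v2, v3) (by simp)
      have h3 := hab s(v3, v) (by simp)
      simp only [Sym2.lift_mk] at h0 h1 h2 h3
      have H : ∀ x y : ↑A, x ≠ y → (x : ℤ) ≠ y := fun x y h hc => h (Subtype.ext hc)
      obtain ⟨⟨n1,n2,n3,n4⟩,⟨n5,n6,n7⟩,⟨n8,n9⟩,n10⟩ := hnd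
      have hAP := hA u v2 v u.2 v2.2 v.2 (H _ _ n2) (H _ _ (Ne.symm n9))
      have := H _ _ n1; have := H _ _ n2; have := H _ _ n3; have := H _ _ n4
      have := H _ _ n5; have := H _ _ n6; have := H _ _ n7
      have := H _ _ n8; have := H _ _ n9; have := H _ _ n10
      omega
  · rintro u p hp hlen ⟨a, b, hab⟩
    cases p with
    | nil => simp at hlen
    | cons h01 p =>
    cases p with
    | nil => simp at hlen
    | cons h12 p =>
    cases p with
    | nil => simp at hlen
    | cons h23 p =>
    cases p with
    | nil => simp at hlen
    | cons h34 p =>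
    cases p with
    | cons h45 p => simp at hlen
    | nil =>
      rename_i v1 v2 v3
      have hnd := hp.support_nodup
      simp [List.nodup_cons] at hnd
      have h0 := hab s(u, v1) (by simp)
      have h1 := hab s(v1, v2) (by simp)
      have h2 := hab s(v2, v3) (by simp)
      have h3 := hab s(v3, u) (by simp)
      simp only [Sym2.lift_mk] at h0 h1 h2 h3
      have H : ∀ x y : ↑A, x ≠ y → (x : ℤ) ≠ y := fun x y h hc => h (Subtype.ext hc)
      obtain ⟨⟨n1,n2,n3⟩,⟨n4,n5⟩,n6⟩ := hnd
      have := H _ _ n1; have := H _ _ n2; have := H _ _ n3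
      have := H _ _ n4; have := H _ _ n5; have := H _ _ n6
      omega
end

section
/- For every n ≥ 1 and every ε > 0, there exists a constant c > 0 (depending only on ε) such that the star chromatic index of the complete graph K_n is at most c · n^{1+ε}. -/
/-!
Colour the edge `uv` by `f u + f v`, where `f` injects the vertices into a set `A ⊆ [0, N)`
without 3-term progressions. Injectivity makes this proper, and a two-coloured path or
4-cycle `v₀ v₁ v₂ v₃ v₄` must alternate, which forces `f v₀ + f v₄ = 2 f v₂` with
`v₀ ≠ v₂`: a nontrivial progression in `A`. Behrend's bound
`r₃(N) ≥ N exp(-4 √(log N)) ≥ c_δ N ^ (1 - δ)` lets one take `N ≈ n ^ (1 + ε)`,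
and the colouring uses `2 N` colours.
-/

open SimpleGraph

open Real Function

lemma SimpleGraph.Walk.exists_eq_of_length_eq_four {V : Type*} {G : SimpleGraph V} {u v : V}
    (p : G.Walk u v) (h : p.length = 4) :
    ∃ v₁ v₂ v₃, p.support = [u, v₁, v₂, v₃, v] ∧
      p.edges = [s(u, v₁), s(v₁, v₂), s(v₂, v₃), s(v₃, v)] := by
  rcases p with _ | ⟨_, _ | ⟨_, _ | ⟨_, _ | ⟨_, _ | ⟨_, p⟩⟩⟩⟩⟩ <;> simp at h ⊢

lemma eq_and_eq_of_eq_or_eq {α : Type*} {x₁ x₂ x₃ x₄ a b : α}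
    (h₁ : x₁ = a ∨ x₁ = b) (h₂ : x₂ = a ∨ x₂ = b) (h₃ : x₃ = a ∨ x₃ = b)
    (h₄ : x₄ = a ∨ x₄ = b) (h₁₂ : x₁ ≠ x₂) (h₂₃ : x₂ ≠ x₃) (h₃₄ : x₃ ≠ x₄) :
    x₁ = x₃ ∧ x₂ = x₄ := by
  rcases h₁ with rfl | rfl <;> rcases h₂ with rfl | rfl <;> rcases h₃ with h₃ | h₃ <;>
    rcases h₄ with h₄ | h₄ <;> simp_all

lemma IsStarEdgeColoring.of_comp {V α β : Type*} {G : SimpleGraph V} {c : Sym2 V → α}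
    (g : α → β) (h : IsStarEdgeColoring G (g ∘ c)) : IsStarEdgeColoring G c := by
  obtain ⟨hproper, hpath, hcycle⟩ := h
  refine ⟨fun e₁ h₁ e₂ h₂ hne hv heq ↦ hproper e₁ h₁ e₂ h₂ hne hv (congrArg g heq),
    fun u v p hp hlen ⟨a, b, hab⟩ ↦ hpath u v p hp hlen ⟨g a, g b, fun e he ↦ ?_⟩,
    fun u p hp hlen ⟨a, b, hab⟩ ↦ hcycle u p hp hlen ⟨g a, g b, fun e he ↦ ?_⟩⟩ <;>
  rcases hab e he with h | h <;> simp [h]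

lemma starChromaticIndex_le_of_isStarEdgeColoring {V : Type*} {G : SimpleGraph V}
    {c : Sym2 V → ℕ} {k : ℕ} (hc : IsStarEdgeColoring G c) (hk : ∀ e, c e < k) :
    starChromaticIndex G ≤ k :=
  Nat.sInf_le ⟨fun e ↦ ⟨c e, hk e⟩, hc.of_comp Fin.val⟩

section SumColoring

variable {V M : Type*} [AddCancelCommMonoid M] {f : V → M}

def sumColoring (f : V → M) : Sym2 V → M :=
  Sym2.lift ⟨fun u v ↦ f u + f v, fun _ _ ↦ add_comm _ _⟩

@[simp]
lemma sumColoring_mk (u v : V) : sumColoring f s(u, v) = f u + f v := rfl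

lemma sumColoring_ne_of_ne (hf : Injective f) {u v w : V} (h : u ≠ w) :
    sumColoring f s(u, v) ≠ sumColoring f s(v, w) := by
  rw [sumColoring_mk, sumColoring_mk, add_comm (f v)]
  exact fun h' ↦ h (hf (add_right_cancel h'))

lemma sumColoring_ne_of_mem (hf : Injective f) {e₁ e₂ : Sym2 V} (hne : e₁ ≠ e₂) {v : V}
    (h₁ : v ∈ e₁) (h₂ : v ∈ e₂) : sumColoring f e₁ ≠ sumColoring f e₂ := by
  obtain ⟨x, rfl⟩ := Sym2.mem_iff_exists.1 h₁
  obtain ⟨y, rfl⟩ := Sym2.mem_iff_exists.1 h₂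
  rw [Sym2.eq_swap (a := v)]
  exact sumColoring_ne_of_ne hf (by rintro rfl; exact hne rfl)

lemma add_eq_add_of_add_eq_add_of_add_eq_add {a b c d e : M} (h₁ : a + b = c + d)
    (h₂ : b + c = d + e) : a + e = c + c :=
  add_right_cancel (b := b + d) <| calc
    a + e + (b + d) = (a + b) + (d + e) := by abel
    _ = (c + d) + (b + c) := by rw [h₁, h₂]
    _ = c + c + (b + d) := by abel

/-- A two-coloured walk `u v₁ v₂ v₃ w` alternates, so `f u + f w = f v₂ + f v₂`. -/
lemma sumColoring_not_two_colored (hf : Injective f) (hA : ThreeAPFree (Set.range f))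
    {u v₁ v₂ v₃ w : V} (h₀₂ : u ≠ v₂) (h₁₃ : v₁ ≠ v₃) (h₂₄ : v₂ ≠ w) :
    ¬ ∃ a b : M, ∀ e ∈ [s(u, v₁), s(v₁, v₂), s(v₂, v₃), s(v₃, w)],
      sumColoring f e = a ∨ sumColoring f e = b := by
  rintro ⟨a, b, hab⟩
  obtain ⟨h₁, h₂⟩ := eq_and_eq_of_eq_or_eq (hab _ (by simp)) (hab _ (by simp))
    (hab _ (by simp)) (hab _ (by simp)) (sumColoring_ne_of_ne hf h₀₂)
    (sumColoring_ne_of_ne hf h₁₃) (sumColoring_ne_of_ne hf h₂₄)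
  simp only [sumColoring_mk] at h₁ h₂
  exact h₀₂ (hf (hA ⟨u, rfl⟩ ⟨v₂, rfl⟩ ⟨w, rfl⟩ (add_eq_add_of_add_eq_add_of_add_eq_add h₁ h₂)))

theorem isStarEdgeColoring_sumColoring (G : SimpleGraph V) (hf : Injective f)
    (hA : ThreeAPFree (Set.range f)) : IsStarEdgeColoring G (sumColoring f) := by
  refine ⟨fun e₁ _ e₂ _ hne ⟨v, h₁, h₂⟩ ↦ sumColoring_ne_of_mem hf hne h₁ h₂, ?_, ?_⟩
  · intro u v p hp hlen
    obtain ⟨v₁, v₂, v₃, hsupp, hedges⟩ := p.exists_eq_of_length_eq_four hlen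
    have hnodup := hp.support_nodup
    simp only [hsupp, List.nodup_cons, List.mem_cons, List.not_mem_nil, or_false, not_or]
      at hnodup
    obtain ⟨⟨-, h₀₂, -⟩, ⟨-, h₁₃, -⟩, ⟨-, h₂₄⟩, -⟩ := hnodup
    rw [hedges]
    exact sumColoring_not_two_colored hf hA h₀₂ h₁₃ h₂₄
  · intro u p hp hlen
    obtain ⟨v₁, v₂, v₃, hsupp, hedges⟩ := p.exists_eq_of_length_eq_four hlen
    have hnodup := hp.support_nodup
    simp only [hsupp, List.tail_cons, List.nodup_cons, List.mem_cons, List.not_mem_nil,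
      or_false, not_or] at hnodup
    obtain ⟨⟨-, h₁₃, -⟩, ⟨-, h₂₀⟩, -⟩ := hnodup
    rw [hedges]
    exact sumColoring_not_two_colored hf hA (Ne.symm h₂₀) h₁₃ h₂₀

end SumColoring

theorem starChromaticIndex_le_of_card_le_rothNumberNat {V : Type*} [Fintype V]
    (G : SimpleGraph V) {N : ℕ} (h : Fintype.card V ≤ rothNumberNat N) :
    starChromaticIndex G ≤ 2 * N := by
  obtain ⟨A, hAN, hcard, hA⟩ := rothNumberNat_spec N
  obtain ⟨ι⟩ := Function.Embedding.nonempty_of_card_le (β := A) (by simpa [hcard])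
  have hlt (v : V) : (ι v : ℕ) < N := Finset.mem_range.1 (hAN (ι v).2)
  refine starChromaticIndex_le_of_isStarEdgeColoring (c := sumColoring fun v ↦ (ι v : ℕ))
    (isStarEdgeColoring_sumColoring G (Subtype.val_injective.comp ι.injective)
      (hA.mono ?_)) fun e ↦ ?_
  · rintro _ ⟨v, rfl⟩
    exact (ι v).2
  · induction e using Sym2.ind with
    | _ u v => have := hlt u; have := hlt v; simp only [sumColoring_mk]; omega

/-- `4 √t ≤ 4 / δ + δ t` for `t = log x`, since `(δ √t - 2)² ≥ 0`. -/
lemma exp_neg_four_div_mul_rpow_neg_le {δ x : ℝ} (hδ : 0 < δ) (hx : 1 ≤ x) :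
    exp (-(4 / δ)) * x ^ (-δ) ≤ exp (-4 * √(log x)) := by
  rw [rpow_def_of_pos (by linarith), ← exp_add, exp_le_exp]
  have hs : √(log x) ^ 2 = log x := sq_sqrt (log_nonneg hx)
  have hsq : 4 / δ + δ * √(log x) ^ 2 - 4 * √(log x) = (δ * √(log x) - 2) ^ 2 / δ := by
    field_simp
    ring
  have : 0 ≤ (δ * √(log x) - 2) ^ 2 / δ := by positivity
  nlinarith

theorem exp_neg_four_div_mul_rpow_le_rothNumberNat {δ : ℝ} (hδ : 0 < δ) {N : ℕ} (hN : 1 ≤ N) :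
    exp (-(4 / δ)) * (N : ℝ) ^ (1 - δ) ≤ rothNumberNat N := by
  have hN' : (1 : ℝ) ≤ N := by exact_mod_cast hN
  calc exp (-(4 / δ)) * (N : ℝ) ^ (1 - δ) = N * (exp (-(4 / δ)) * (N : ℝ) ^ (-δ)) := by
        rw [sub_eq_add_neg, rpow_add (by linarith), rpow_one]
        ring
    _ ≤ N * exp (-4 * √(log N)) := by gcongr; exact exp_neg_four_div_mul_rpow_neg_le hδ hN'
    _ ≤ rothNumberNat N := Behrend.roth_lower_bound

/-- Inverting `c N ^ (1 - δ) ≤ r₃(N)` with `1 - δ = (1 + ε)⁻¹`. -/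
theorem exists_le_rothNumberNat_and_le_mul_rpow {ε : ℝ} (hε : 0 < ε) :
    ∃ C > 0, ∀ n : ℕ, 1 ≤ n → ∃ N : ℕ, n ≤ rothNumberNat N ∧ (N : ℝ) ≤ C * n ^ (1 + ε) := by
  set δ := ε / (1 + ε)
  set c := exp (-(4 / δ))
  have hδ : 0 < δ := by positivity
  have hexp : (1 + ε) * (1 - δ) = 1 := by simp only [δ]; field_simp; ring
  refine ⟨c⁻¹ ^ (1 + ε) + 1, by positivity, fun n hn ↦ ?_⟩
  have hn' : (1 : ℝ) ≤ n := by exact_mod_cast hn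
  set x := ((n : ℝ) / c) ^ (1 + ε) with hx_def
  have hx : 0 < x := by positivity
  refine ⟨⌈x⌉₊, ?_, ?_⟩
  · have hroth := exp_neg_four_div_mul_rpow_le_rothNumberNat hδ (Nat.ceil_pos.2 hx)
    have hmono : x ^ (1 - δ) ≤ (⌈x⌉₊ : ℝ) ^ (1 - δ) :=
      rpow_le_rpow hx.le (Nat.le_ceil x) (by rw [sub_nonneg, div_le_one (by positivity)]; linarith)
    have hxδ : c * x ^ (1 - δ) = n := by
      rw [← rpow_mul (by positivity), hexp, rpow_one, mul_div_cancel₀ _ (exp_pos _).ne']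
    exact_mod_cast hxδ ▸ (mul_le_mul_of_nonneg_left hmono (exp_pos _).le).trans hroth
  · have hn1 : 1 ≤ (n : ℝ) ^ (1 + ε) := one_le_rpow hn' (by linarith)
    calc (⌈x⌉₊ : ℝ) ≤ x + 1 := (Nat.ceil_lt_add_one hx.le).le
      _ = c⁻¹ ^ (1 + ε) * n ^ (1 + ε) + 1 := by
        rw [hx_def, div_eq_mul_inv, mul_rpow (by positivity) (by positivity), mul_comm]
      _ ≤ (c⁻¹ ^ (1 + ε) + 1) * n ^ (1 + ε) := by nlinarith

/-- for every ε > 0 there is c > 0 such that for all n ≥ 1,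
χ'_s(K_n) ≤ c · n^(1+ε). -/
theorem starChromaticIndex_completeGraph_le_rpow :
    ∀ ε : ℝ, 0 < ε → ∃ c : ℝ, 0 < c ∧ ∀ n : ℕ, 1 ≤ n →
      (starChromaticIndex (⊤ : SimpleGraph (Fin n)) : ℝ) ≤ c * (n : ℝ) ^ ((1 : ℝ) + ε) := by
  intro ε hε
  obtain ⟨C, hC, hroth⟩ := exists_le_rothNumberNat_and_le_mul_rpow hε
  refine ⟨2 * C, by positivity, fun n hn ↦ ?_⟩
  obtain ⟨N, hnN, hNC⟩ := hroth n hn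
  have hχ := starChromaticIndex_le_of_card_le_rothNumberNat (⊤ : SimpleGraph (Fin n))
    (by simpa using hnN)
  calc (starChromaticIndex (⊤ : SimpleGraph (Fin n)) : ℝ) ≤ 2 * N := by exact_mod_cast hχ
    _ ≤ 2 * (C * n ^ (1 + ε)) := by gcongr
    _ = 2 * C * n ^ (1 + ε) := by ring
end

section
/- Suppose the edges of K_n are colored with b colors so that the coloring is a star edge-coloring. For each color j, let a_j be the number of edges of color j, and let b_{i,j} be the number of 3-edge paths colored i, j, i. Then for each fixed color j, the sum over all colors i of b_{i,j} is at most a_j · (n − 2a_j). -/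
open SimpleGraph

/-- Number of edges of `K_n` of color `i`. -/
def colorClassCard (n b : ℕ) (c : Sym2 (Fin n) → Fin b) (i : Fin b) : ℕ :=
  ((⊤ : SimpleGraph (Fin n)).edgeFinset.filter (fun e => c e = i)).card

/-- Number of 3-edge paths in `K_n` colored `i, j, i` (each path counted once,
normalized so that the first endpoint is smaller than the last). -/
def biColoredPathCard (n b : ℕ) (c : Sym2 (Fin n) → Fin b) (i j : Fin b) : ℕ :=
  (Finset.univ.filter (fun t : Fin n × Fin n × Fin n × Fin n =>
      t.1 ≠ t.2.1 ∧ t.1 ≠ t.2.2.1 ∧ t.1 ≠ t.2.2.2 ∧ t.2.1 ≠ t.2.2.1 ∧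
      t.2.1 ≠ t.2.2.2 ∧ t.2.2.1 ≠ t.2.2.2 ∧ t.1 < t.2.2.2 ∧
      c s(t.1, t.2.1) = i ∧ c s(t.2.1, t.2.2.1) = j ∧ c s(t.2.2.1, t.2.2.2) = i)).card

/-! Send an `i, j, i`-coloured path `t₁ t₂ t₃ t₄` to the pair (middle edge `t₂t₃`, endpoint `t₁`).
The endpoint is not covered by the matching `M_j`: a `j`-edge `t₁w` would close a bicoloured
4-cycle (if `w = t₄`) or extend the path to a bicoloured path with 4 edges. The map is injective:
properness at `t₃` recovers `t₄`, and two paths from `t₁` crossing the middle edge in opposite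
directions would again form a bicoloured 4-cycle or 4-edge path. Hence there are at most `a_j`
times `n - 2a_j` such paths, the second factor counting the vertices not covered by `M_j`. -/

open Finset

variable {V α : Type*} {G : SimpleGraph V} {c : Sym2 V → α}

namespace IsStarEdgeColoring

theorem eq_of_color_eq (hc : IsStarEdgeColoring G c) {u v w : V} (huv : G.Adj u v)
    (huw : G.Adj u w) (h : c s(u, v) = c s(u, w)) : v = w := by
  by_contra hvw
  refine hc.1 _ huv _ huw ?_ ⟨u, Sym2.mem_mk_left _ _, Sym2.mem_mk_left _ _⟩ h
  simp [hvw, huw.ne]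

theorem not_bicolored_path_four (hc : IsStarEdgeColoring G c) {v₀ v₁ v₂ v₃ v₄ : V}
    (h₀₁ : G.Adj v₀ v₁) (h₁₂ : G.Adj v₁ v₂) (h₂₃ : G.Adj v₂ v₃) (h₃₄ : G.Adj v₃ v₄)
    (hnd : [v₀, v₁, v₂, v₃, v₄].Nodup)
    (hx : c s(v₀, v₁) = c s(v₂, v₃)) (hy : c s(v₁, v₂) = c s(v₃, v₄)) : False := by
  let p : G.Walk v₀ v₄ := .cons h₀₁ (.cons h₁₂ (.cons h₂₃ (.cons h₃₄ .nil)))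
  refine hc.2.1 _ _ p ((Walk.isPath_def _).2 hnd) rfl ⟨c s(v₀, v₁), c s(v₁, v₂), ?_⟩
  simp [p, hx, hy]

theorem not_bicolored_cycle_four (hc : IsStarEdgeColoring G c) {v₀ v₁ v₂ v₃ : V}
    (h₀₁ : G.Adj v₀ v₁) (h₁₂ : G.Adj v₁ v₂) (h₂₃ : G.Adj v₂ v₃) (h₃₀ : G.Adj v₃ v₀)
    (hnd : [v₀, v₁, v₂, v₃].Nodup)
    (hx : c s(v₀, v₁) = c s(v₂, v₃)) (hy : c s(v₁, v₂) = c s(v₃, v₀)) : False := by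
  let p : G.Walk v₀ v₀ := .cons h₀₁ (.cons h₁₂ (.cons h₂₃ (.cons h₃₀ .nil)))
  have hp : p.IsCycle := by
    rw [Walk.cons_isCycle_iff, Walk.isPath_def]
    simp only [Walk.support_cons, Walk.support_nil, Walk.edges_cons, Walk.edges_nil] at hnd ⊢
    grind
  refine hc.2.2 _ p hp rfl ⟨c s(v₀, v₁), c s(v₁, v₂), ?_⟩
  simp [p, hx, hy]

theorem color_ne_middle_of_alternating (hc : IsStarEdgeColoring G c) {t₁ t₂ t₃ t₄ w : V}
    (h₁₂ : G.Adj t₁ t₂) (h₂₃ : G.Adj t₂ t₃) (h₃₄ : G.Adj t₃ t₄) (hnd : [t₁, t₂, t₃, t₄].Nodup)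
    (hi : c s(t₁, t₂) = c s(t₃, t₄)) (hw : G.Adj t₁ w) : c s(t₁, w) ≠ c s(t₂, t₃) := by
  intro hj
  have hw₂ : w ≠ t₂ := by
    rintro rfl
    have : t₁ = t₃ := hc.eq_of_color_eq h₁₂.symm h₂₃ (by rwa [Sym2.eq_swap])
    simp_all
  have hw₃ : w ≠ t₃ := by
    rintro rfl
    have : t₁ = t₂ := hc.eq_of_color_eq hw.symm h₂₃.symm (by rw [Sym2.eq_swap, hj, Sym2.eq_swap])
    simp_all
  by_cases hw₄ : w = t₄
  · subst hw₄
    exact hc.not_bicolored_cycle_four h₁₂ h₂₃ h₃₄ hw.symm hnd hi (by rw [hj.symm, Sym2.eq_swap])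
  · refine hc.not_bicolored_path_four hw.symm h₁₂ h₂₃ h₃₄ ?_ (by rwa [Sym2.eq_swap]) hi
    simp only [List.nodup_cons, List.mem_cons, List.not_mem_nil] at hnd ⊢
    grind [hw.ne]

theorem not_alternating_of_reversed (hc : IsStarEdgeColoring G c) {t₁ t₂ t₃ t₄ t₄' : V}
    (h₁₂ : G.Adj t₁ t₂) (h₃₄ : G.Adj t₃ t₄) (h₁₃ : G.Adj t₁ t₃)
    (h₂₄' : G.Adj t₂ t₄') (hnd : [t₁, t₂, t₃, t₄].Nodup) (hnd' : [t₁, t₃, t₂, t₄'].Nodup)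
    (hi : c s(t₁, t₂) = c s(t₃, t₄)) (hi' : c s(t₁, t₃) = c s(t₂, t₄')) : False := by
  by_cases h₄ : t₄ = t₄'
  · subst h₄
    refine hc.not_bicolored_cycle_four h₁₂ h₂₄' h₃₄.symm h₁₃.symm ?_
      (by rw [hi, Sym2.eq_swap]) (by rw [← hi', Sym2.eq_swap])
    simp only [List.nodup_cons, List.mem_cons, List.not_mem_nil] at hnd ⊢
    grind
  · refine hc.not_bicolored_path_four h₂₄'.symm h₁₂.symm h₁₃ h₃₄ ?_
      (by rw [hi', Sym2.eq_swap]) (by rw [← hi, Sym2.eq_swap])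
    simp only [List.nodup_cons, List.mem_cons, List.not_mem_nil] at hnd hnd' ⊢
    grind

end IsStarEdgeColoring

def alternatingPaths (G : SimpleGraph V) (c : Sym2 V → α) : Set (V × V × V × V) :=
  {t | G.Adj t.1 t.2.1 ∧ G.Adj t.2.1 t.2.2.1 ∧ G.Adj t.2.2.1 t.2.2.2 ∧
    [t.1, t.2.1, t.2.2.1, t.2.2.2].Nodup ∧ c s(t.1, t.2.1) = c s(t.2.2.1, t.2.2.2)}

theorem IsStarEdgeColoring.injOn_alternatingPaths (hc : IsStarEdgeColoring G c) :
    Set.InjOn (fun t : V × V × V × V => (s(t.2.1, t.2.2.1), t.1)) (alternatingPaths G c) := by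
  rintro ⟨t₁, t₂, t₃, t₄⟩ ⟨h₁₂, -, h₃₄, hnd, hi⟩ ⟨t₁', t₂', t₃', t₄'⟩ ⟨h₁₂', -, h₃₄', hnd', hi'⟩
    heq
  obtain ⟨hmid, rfl⟩ := Prod.mk.inj heq
  rcases Sym2.eq_iff.1 hmid with ⟨rfl, rfl⟩ | ⟨rfl, rfl⟩
  · obtain rfl : t₄ = t₄' := hc.eq_of_color_eq h₃₄ h₃₄' (hi.symm.trans hi')
    rfl
  · exact (hc.not_alternating_of_reversed h₁₂ h₃₄ h₁₂' h₃₄' hnd hnd' hi hi').elim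

section ColorClass

variable [Fintype G.edgeSet] [DecidableEq α]

variable (G c) in
def colorClass (j : α) : Finset (Sym2 V) :=
  G.edgeFinset.filter fun e => c e = j

variable [DecidableEq V]

variable (G c) in
def colorClassVerts (j : α) : Finset V :=
  (colorClass G c j).biUnion Sym2.toFinset

variable {j : α}

theorem mem_colorClassVerts {v : V} :
    v ∈ colorClassVerts G c j ↔ ∃ w, G.Adj v w ∧ c s(v, w) = j := by
  simp only [colorClassVerts, colorClass, mem_biUnion, mem_filter, mem_edgeFinset,
    Sym2.mem_toFinset]
  constructor
  · rintro ⟨e, ⟨he, hj⟩, hv⟩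
    obtain ⟨w, rfl⟩ := Sym2.mem_iff_exists.1 hv
    exact ⟨w, he, hj⟩
  · rintro ⟨w, hw, hj⟩
    exact ⟨s(v, w), ⟨hw, hj⟩, Sym2.mem_mk_left v w⟩

theorem IsStarEdgeColoring.card_colorClassVerts (hc : IsStarEdgeColoring G c) :
    #(colorClassVerts G c j) = 2 * #(colorClass G c j) := by
  have hdisj : (colorClass G c j : Set (Sym2 V)).PairwiseDisjoint Sym2.toFinset := by
    intro e he e' he' hne
    simp only [colorClass, coe_filter, mem_edgeFinset, Set.mem_ofPred_eq] at he he'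
    refine disjoint_left.2 fun v hv hv' => hc.1 e he.1 e' he'.1 hne ?_ (he.2.trans he'.2.symm)
    exact ⟨v, Sym2.mem_toFinset.1 hv, Sym2.mem_toFinset.1 hv'⟩
  rw [colorClassVerts, card_biUnion hdisj, sum_const_nat fun e he => ?_, mul_comm]
  simp only [colorClass, mem_filter, mem_edgeFinset] at he
  exact Sym2.card_toFinset_of_not_isDiag e (G.not_isDiag_of_mem_edgeSet he.1)

variable [Fintype V]

theorem IsStarEdgeColoring.card_le_of_subset_alternatingPaths (hc : IsStarEdgeColoring G c)
    {P : Finset (V × V × V × V)}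
    (hP : ↑P ⊆ {t ∈ alternatingPaths G c | c s(t.2.1, t.2.2.1) = j}) :
    #P ≤ #(colorClass G c j) * (Fintype.card V - 2 * #(colorClass G c j)) := by
  have hmaps : Set.MapsTo (fun t : V × V × V × V => (s(t.2.1, t.2.2.1), t.1)) P
      ↑(colorClass G c j ×ˢ (colorClassVerts G c j)ᶜ) := by
    rintro ⟨t₁, t₂, t₃, t₄⟩ ht
    obtain ⟨⟨h₁₂, h₂₃, h₃₄, hnd, hi⟩, hj⟩ := hP ht
    refine mem_product.2 ⟨mem_filter.2 ⟨mem_edgeFinset.2 h₂₃, hj⟩, ?_⟩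
    rw [mem_compl, mem_colorClassVerts]
    rintro ⟨w, hw, hwj⟩
    exact hc.color_ne_middle_of_alternating h₁₂ h₂₃ h₃₄ hnd hi hw (hwj.trans hj.symm)
  calc #P ≤ #(colorClass G c j ×ˢ (colorClassVerts G c j)ᶜ) :=
        card_le_card_of_injOn _ hmaps (hc.injOn_alternatingPaths.mono fun t ht => (hP ht).1)
    _ = #(colorClass G c j) * (Fintype.card V - 2 * #(colorClass G c j)) := by
        rw [card_product, card_compl, hc.card_colorClassVerts]

end ColorClass

/-- in a star edge-coloring of K_n, for each color j,
∑_i b_{i,j} ≤ a_j · (n − 2a_j). -/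
theorem sum_biColoredPaths_le (n b : ℕ) (c : Sym2 (Fin n) → Fin b)
    (hc : IsStarEdgeColoring (⊤ : SimpleGraph (Fin n)) c) (j : Fin b) :
    ∑ i : Fin b, biColoredPathCard n b c i j ≤
      colorClassCard n b c j * (n - 2 * colorClassCard n b c j) := by
  simp only [biColoredPathCard]
  rw [← card_biUnion]
  · refine (hc.card_le_of_subset_alternatingPaths fun t ht => ?_).trans_eq
      (by rw [Fintype.card_fin]; rfl)
    obtain ⟨i, -, ht⟩ := mem_biUnion.1 ht
    obtain ⟨-, h₁₂, h₁₃, h₁₄, h₂₃, h₂₄, h₃₄, -, hi, hj, hi'⟩ := mem_filter.1 ht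
    exact ⟨⟨h₁₂, h₂₃, h₃₄, by simp [*], hi.trans hi'.symm⟩, hj⟩
  · intro i _ i' _ hii'
    refine disjoint_left.2 fun t ht ht' => hii' ?_
    obtain ⟨-, -, -, -, -, -, -, -, rfl, -⟩ := mem_filter.1 ht
    exact (mem_filter.1 ht').2.2.2.2.2.2.2.2.1
end

section
/- If the complete graph K_n admits a star edge-coloring with b colors, then b ≥ 2n(n−1)/(n+2). In particular, χ'_s(K_n) ≥ (2 + o(1))·n. -/
/-!
Let `a_j` be the number of darts (oriented edges) of colour `j`, so that `∑ a_j = n(n-1)`, and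
call a vertex uncovered by `j` if no edge of colour `j` meets it; there are `n - a_j` of them.
An ordered pair of distinct, non-opposite darts `(u,v), (x,y)` of colour `j` spans four vertices,
and the star condition forces `u` to be uncovered by the colour of `vx`: an edge `uz` of that colour
would close a bicoloured path `z u v x y` or a bicoloured 4-cycle. Sending the pair to `((v,x), u)`
is injective, whence `∑ (a_j² - 2a_j) ≤ ∑ a_j (n - a_j)`, i.e. `2 ∑ a_j² ≤ (n+2) ∑ a_j`.
Cauchy–Schwarz `(∑ a_j)² ≤ b ∑ a_j²` then gives `2 n(n-1) ≤ b(n+2)`.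
-/

open SimpleGraph

open Finset Function

theorem List.not_forall_eq_or_eq_of_injective {β γ : Type*} [DecidableEq γ] {f : β → γ}
    (hf : Injective f) {l : List β} (hl : l.Nodup) (hlen : 2 < l.length) (a b : γ) :
    ¬ ∀ x ∈ l, f x = a ∨ f x = b := by
  intro h
  have hsub : (l.map f).toFinset ⊆ {a, b} := by
    intro y hy
    obtain ⟨x, hx, rfl⟩ := List.mem_map.1 (List.mem_toFinset.1 hy)
    simpa using h x hx
  have hcard := (card_le_card hsub).trans card_le_two
  rw [List.toFinset_card_of_nodup (hl.map hf), List.length_map] at hcard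
  omega

theorem isStarEdgeColoring_of_injective {V α : Type*} {G : SimpleGraph V} {c : Sym2 V → α}
    (hc : Injective c) : IsStarEdgeColoring G c := by
  classical
  refine ⟨fun _ _ _ _ hne _ h => hne (hc h), ?_, ?_⟩
  · rintro u v p hp hlen ⟨a, b, h⟩
    exact List.not_forall_eq_or_eq_of_injective hc hp.isTrail.edges_nodup
      (by simp [hlen]) a b h
  · rintro u p hp hlen ⟨a, b, h⟩
    exact List.not_forall_eq_or_eq_of_injective hc hp.isTrail.edges_nodup
      (by simp [hlen]) a b h

namespace IsStarEdgeColoring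

variable {V α : Type*} {c : Sym2 V → α}

theorem eq_of_mem_of_color_eq (hc : IsStarEdgeColoring (⊤ : SimpleGraph V) c)
    {e₁ e₂ : Sym2 V} (h₁ : ¬ e₁.IsDiag) (h₂ : ¬ e₂.IsDiag) {v : V} (hv₁ : v ∈ e₁)
    (hv₂ : v ∈ e₂) (h : c e₁ = c e₂) : e₁ = e₂ := by
  by_contra hne
  exact hc.1 e₁ (by simpa using h₁) e₂ (by simpa using h₂) hne ⟨v, hv₁, hv₂⟩ h

theorem eq_of_color_eq_s4 (hc : IsStarEdgeColoring (⊤ : SimpleGraph V) c) {a x y : V}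
    (hx : a ≠ x) (hy : a ≠ y) (h : c s(a, x) = c s(a, y)) : x = y :=
  Sym2.congr_right.1 <|
    hc.eq_of_mem_of_color_eq (by simpa using hx) (by simpa using hy) (Sym2.mem_mk_left a x)
      (Sym2.mem_mk_left a y) h

theorem not_path_bicolored (hc : IsStarEdgeColoring (⊤ : SimpleGraph V) c)
    {v₀ v₁ v₂ v₃ v₄ : V} (hv : [v₀, v₁, v₂, v₃, v₄].Nodup)
    (h₀₂ : c s(v₀, v₁) = c s(v₂, v₃)) (h₁₃ : c s(v₁, v₂) = c s(v₃, v₄)) : False := by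
  have hne := hv
  simp only [List.nodup_cons, List.mem_cons, List.not_mem_nil, List.nodup_nil, or_false,
    not_or, not_false_eq_true, and_true] at hne
  obtain ⟨⟨h01, -⟩, ⟨h12, -⟩, ⟨h23, -⟩, h34⟩ := hne
  let p : (⊤ : SimpleGraph V).Walk v₀ v₄ :=
    .cons h01 <| .cons h12 <| .cons h23 <| .cons h34 .nil
  exact hc.2.1 v₀ v₄ p (Walk.isPath_def _ |>.2 hv) rfl
    ⟨c s(v₀, v₁), c s(v₁, v₂), by simp [p, h₀₂, h₁₃]⟩

theorem not_cycle_bicolored (hc : IsStarEdgeColoring (⊤ : SimpleGraph V) c)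
    {v₀ v₁ v₂ v₃ : V} (hv : [v₀, v₁, v₂, v₃].Nodup)
    (h₀₂ : c s(v₀, v₁) = c s(v₂, v₃)) (h₁₃ : c s(v₁, v₂) = c s(v₃, v₀)) : False := by
  have hne := hv
  simp only [List.nodup_cons, List.mem_cons, List.not_mem_nil, List.nodup_nil, or_false,
    not_or, not_false_eq_true, and_true] at hne
  obtain ⟨⟨h01, h02, h03⟩, ⟨h12, h13⟩, h23⟩ := hne
  let q : (⊤ : SimpleGraph V).Walk v₁ v₀ := .cons h12 <| .cons h23 <| .cons (Ne.symm h03) .nil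
  have hq : q.IsPath := Walk.isPath_def _ |>.2 <| by
    simp [q, Ne.symm h01, Ne.symm h02, Ne.symm h03, h12, h13, h23]
  exact hc.2.2 v₀ (.cons h01 q)
    (Walk.cons_isCycle_iff _ _ |>.2 ⟨hq, by simp [q, h01, h02, h03, h12, h13]⟩) rfl
    ⟨c s(v₀, v₁), c s(v₁, v₂), by simp [q, h₀₂, h₁₃]⟩

theorem color_ne_of_alternating (hc : IsStarEdgeColoring (⊤ : SimpleGraph V) c)
    {u v x y : V} (hd : [u, v, x, y].Nodup) (h : c s(u, v) = c s(x, y)) {z : V} (hz : z ≠ u) :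
    c s(u, z) ≠ c s(v, x) := by
  intro hzc
  have hne := hd
  simp only [List.nodup_cons, List.mem_cons, List.not_mem_nil, List.nodup_nil, or_false,
    not_or, not_false_eq_true, and_true] at hne
  obtain ⟨⟨huv, hux, huy⟩, ⟨hvx, -⟩, -⟩ := hne
  have hzv : z ≠ v := by
    rintro rfl
    exact hux (hc.eq_of_color_eq_s4 (Ne.symm huv) hvx (by rwa [Sym2.eq_swap]))
  have hzx : z ≠ x := by
    rintro rfl
    exact huv (hc.eq_of_color_eq_s4 (Ne.symm hux) (Ne.symm hvx)
      (by rw [Sym2.eq_swap, hzc, Sym2.eq_swap]))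
  by_cases hzy : z = y
  · subst hzy
    exact hc.not_cycle_bicolored hd h (by rw [← hzc, Sym2.eq_swap])
  · have hd' : [z, u, v, x, y].Nodup := List.nodup_cons.2 ⟨by simp [hz, hzv, hzx, hzy], hd⟩
    exact hc.not_path_bicolored hd' (by rwa [Sym2.eq_swap]) h

end IsStarEdgeColoring

section Counting

variable {V α : Type*} [Fintype V] [DecidableEq V] [DecidableEq α]

def colorDarts (c : Sym2 V → α) (j : α) : Finset (V × V) :=
  univ.filter fun p => p.1 ≠ p.2 ∧ c s(p.1, p.2) = j

def uncoveredVerts (c : Sym2 V → α) (j : α) : Finset V :=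
  univ.filter fun u => ∀ z, z ≠ u → c s(u, z) ≠ j

def colorDartPairs (c : Sym2 V → α) (j : α) : Finset ((V × V) × (V × V)) :=
  (colorDarts c j ×ˢ colorDarts c j).filter fun q => q.2 ≠ q.1 ∧ q.2 ≠ q.1.swap

variable {c : Sym2 V → α}

@[simp]
theorem mem_colorDarts {j : α} {p : V × V} :
    p ∈ colorDarts c j ↔ p.1 ≠ p.2 ∧ c s(p.1, p.2) = j := by
  simp [colorDarts]

theorem sum_card_colorDarts [Fintype α] (c : Sym2 V → α) :
    ∑ j, #(colorDarts c j) = Fintype.card V * (Fintype.card V - 1) := by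
  have h := card_eq_sum_card_fiberwise (s := (univ : Finset V).offDiag) (t := univ)
    (f := fun p => c s(p.1, p.2)) (by simp)
  rw [offDiag_card, card_univ, ← Nat.mul_sub_one] at h
  rw [h]
  congr! 2 with j
  ext p
  simp

theorem IsStarEdgeColoring.card_colorDarts_add_card_uncoveredVerts
    (hc : IsStarEdgeColoring (⊤ : SimpleGraph V) c) (j : α) :
    #(colorDarts c j) + #(uncoveredVerts c j) = Fintype.card V := by
  have hinj : Set.InjOn Prod.fst (colorDarts c j : Set (V × V)) := by
    rintro ⟨u, v⟩ huv ⟨u', v'⟩ huv' (rfl : u = u')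
    simp only [mem_coe, mem_colorDarts] at huv huv'
    rw [hc.eq_of_color_eq_s4 huv.1 huv'.1 (huv.2.trans huv'.2.symm)]
  have himage : (colorDarts c j).image Prod.fst = (uncoveredVerts c j)ᶜ := by
    ext u
    simp only [mem_image, mem_colorDarts, Prod.exists, exists_and_right, exists_eq_right,
      uncoveredVerts, compl_filter, not_forall, not_not, exists_prop, mem_filter, mem_univ,
      true_and, ne_comm (b := u)]
  rw [← card_image_of_injOn hinj, himage, card_compl_add_card]

theorem card_colorDarts_mul_self_le (c : Sym2 V → α) (j : α) :
    #(colorDarts c j) * #(colorDarts c j) ≤ #(colorDartPairs c j) + 2 * #(colorDarts c j) := by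
  set A := colorDarts c j
  have hdeg : (A ×ˢ A).filter (fun q => ¬ (q.2 ≠ q.1 ∧ q.2 ≠ q.1.swap)) ⊆
      A.image (fun p => (p, p)) ∪ A.image (fun p => (p, p.swap)) := by
    rintro ⟨p, q⟩ hpq
    simp only [mem_filter, mem_product, not_and_or, not_ne_iff] at hpq
    obtain ⟨⟨hp, -⟩, rfl | rfl⟩ := hpq <;> simp [hp]
  calc #A * #A = #(colorDartPairs c j) + #((A ×ˢ A).filter _) :=
        (card_product A A).symm.trans (card_filter_add_card_filter_not _).symm
    _ ≤ #(colorDartPairs c j) + (#A + #A) := by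
        gcongr
        exact (card_le_card hdeg).trans <|
          (card_union_le _ _).trans (add_le_add card_image_le card_image_le)
    _ = #(colorDartPairs c j) + 2 * #A := by ring

theorem IsStarEdgeColoring.nodup_of_mem_colorDartPairs
    (hc : IsStarEdgeColoring (⊤ : SimpleGraph V) c) {j : α} {u v x y : V}
    (h : ((u, v), (x, y)) ∈ colorDartPairs c j) : [u, v, x, y].Nodup := by
  simp only [colorDartPairs, mem_filter, mem_product, mem_colorDarts, ne_eq, Prod.swap_prod_mk,
    Prod.mk.injEq, not_and] at h
  obtain ⟨⟨⟨huv, hj⟩, hxy, hj'⟩, hne, hne'⟩ := h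
  have hdisj : ∀ w, w ∈ s(u, v) → w ∈ s(x, y) → False := fun w hw hw' => by
    rcases Sym2.eq_iff.1 <| hc.eq_of_mem_of_color_eq (by simpa using huv) (by simpa using hxy)
      hw hw' (hj.trans hj'.symm) with ⟨rfl, rfl⟩ | ⟨rfl, rfl⟩
    exacts [hne rfl rfl, hne' rfl rfl]
  simp only [List.nodup_cons, List.mem_cons, List.not_mem_nil, List.nodup_nil, or_false,
    not_or, not_false_eq_true, and_true]
  have hu (w : V) (hw : w ∈ s(x, y)) : u ≠ w := fun h => hdisj u (by simp) (h ▸ hw)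
  have hv (w : V) (hw : w ∈ s(x, y)) : v ≠ w := fun h => hdisj v (by simp) (h ▸ hw)
  exact ⟨⟨huv, hu x (by simp), hu y (by simp)⟩, ⟨hv x (by simp), hv y (by simp)⟩, hxy⟩

theorem IsStarEdgeColoring.sum_card_colorDartPairs_le [Fintype α]
    (hc : IsStarEdgeColoring (⊤ : SimpleGraph V) c) :
    ∑ j, #(colorDartPairs c j) ≤ ∑ j, #(colorDarts c j) * #(uncoveredVerts c j) := by
  simp only [← card_sigma, ← card_product]
  refine card_le_card_of_injOn
    (fun q => ⟨c s(q.2.1.2, q.2.2.1), ((q.2.1.2, q.2.2.1), q.2.1.1)⟩) ?_ ?_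
  · rintro ⟨j, ⟨u, v⟩, ⟨x, y⟩⟩ hq
    simp only [coe_sigma, Set.mem_sigma_iff, mem_coe, mem_univ, true_and] at hq
    have hd := hc.nodup_of_mem_colorDartPairs hq
    simp only [colorDartPairs, mem_filter, mem_product, mem_colorDarts] at hq
    simp only [coe_sigma, Set.mem_sigma_iff, mem_coe, mem_univ, true_and, mem_product,
      mem_colorDarts, uncoveredVerts, mem_filter, and_true]
    have hvx : v ≠ x := fun h => by simp [h] at hd
    exact ⟨hvx, fun z hz => hc.color_ne_of_alternating hd (hq.1.1.2.trans hq.1.2.2.symm) hz⟩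
  · rintro ⟨j, ⟨u, v⟩, ⟨x, y⟩⟩ hq ⟨j', ⟨u', v'⟩, ⟨x', y'⟩⟩ hq' h
    simp only [Sigma.mk.injEq, Prod.mk.injEq, heq_eq_eq] at h
    obtain ⟨-, ⟨rfl, rfl⟩, rfl⟩ := h
    simp only [coe_sigma, Set.mem_sigma_iff, mem_coe, mem_univ, true_and, colorDartPairs,
      mem_filter, mem_product, mem_colorDarts] at hq hq'
    obtain rfl : j = j' := hq.1.1.2.symm.trans hq'.1.1.2
    obtain rfl : y = y' :=
      hc.eq_of_color_eq_s4 hq.1.2.1 hq'.1.2.1 (hq.1.2.2.trans hq'.1.2.2.symm)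
    rfl

theorem IsStarEdgeColoring.two_mul_sum_sq_card_colorDarts_le [Fintype α]
    (hc : IsStarEdgeColoring (⊤ : SimpleGraph V) c) :
    2 * ∑ j, #(colorDarts c j) ^ 2 ≤ (Fintype.card V + 2) * ∑ j, #(colorDarts c j) := by
  have hsq : ∑ j, #(colorDarts c j) ^ 2 ≤
      ∑ j, #(colorDartPairs c j) + 2 * ∑ j, #(colorDarts c j) := by
    rw [mul_sum, ← sum_add_distrib]
    exact sum_le_sum fun j _ => (sq _).trans_le (card_colorDarts_mul_self_le c j)
  have hsplit : ∑ j, (#(colorDarts c j) * #(uncoveredVerts c j) + #(colorDarts c j) ^ 2) =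
      Fintype.card V * ∑ j, #(colorDarts c j) := by
    rw [mul_sum]
    refine sum_congr rfl fun j _ => ?_
    rw [sq, ← mul_add, add_comm, hc.card_colorDarts_add_card_uncoveredVerts, mul_comm]
  calc 2 * ∑ j, #(colorDarts c j) ^ 2
      ≤ ∑ j, #(colorDarts c j) ^ 2 +
          (∑ j, #(colorDartPairs c j) + 2 * ∑ j, #(colorDarts c j)) := by
        omega
    _ ≤ ∑ j, #(colorDarts c j) ^ 2 +
          (∑ j, #(colorDarts c j) * #(uncoveredVerts c j) + 2 * ∑ j, #(colorDarts c j)) := by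
        have := hc.sum_card_colorDartPairs_le
        omega
    _ = (Fintype.card V + 2) * ∑ j, #(colorDarts c j) := by
        rw [← add_assoc, add_comm (∑ j, _ ^ 2), ← sum_add_distrib, hsplit]
        ring

theorem IsStarEdgeColoring.two_mul_card_mul_card_sub_one_le [Fintype α]
    (hc : IsStarEdgeColoring (⊤ : SimpleGraph V) c) :
    2 * (Fintype.card V * (Fintype.card V - 1)) ≤ Fintype.card α * (Fintype.card V + 2) := by
  set N := ∑ j, #(colorDarts c j) with hN
  rw [sum_card_colorDarts] at hN
  rw [← hN]
  rcases N.eq_zero_or_pos with hN0 | hNpos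
  · simp [hN0]
  refine Nat.le_of_mul_le_mul_right ?_ hNpos
  have hCS : N ^ 2 ≤ Fintype.card α * ∑ j, #(colorDarts c j) ^ 2 := by
    simpa using sq_sum_le_card_mul_sum_sq (s := univ) (f := fun j => #(colorDarts c j))
  calc 2 * N * N = 2 * N ^ 2 := by ring
    _ ≤ Fintype.card α * (2 * ∑ j, #(colorDarts c j) ^ 2) := by linarith
    _ ≤ Fintype.card α * ((Fintype.card V + 2) * N) :=
        Nat.mul_le_mul_left _ hc.two_mul_sum_sq_card_colorDarts_le
    _ = Fintype.card α * (Fintype.card V + 2) * N := by ring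

end Counting

theorem two_mul_card_mul_card_sub_one_le_starChromaticIndex_top_mul {V : Type*} [Fintype V]
    [DecidableEq V] :
    2 * (Fintype.card V * (Fintype.card V - 1)) ≤
      starChromaticIndex (⊤ : SimpleGraph V) * (Fintype.card V + 2) := by
  have hne : {k | ∃ c : Sym2 V → Fin k, IsStarEdgeColoring (⊤ : SimpleGraph V) c}.Nonempty :=
    ⟨_, _, isStarEdgeColoring_of_injective (Fintype.equivFin (Sym2 V)).injective⟩
  obtain ⟨c, hc⟩ : ∃ c : Sym2 V → Fin (starChromaticIndex (⊤ : SimpleGraph V)),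
      IsStarEdgeColoring ⊤ c := Nat.sInf_mem hne
  simpa only [Fintype.card_fin] using hc.two_mul_card_mul_card_sub_one_le

/-- if K_n has a star edge-coloring with b colors then
b ≥ 2n(n−1)/(n+2); in particular χ'_s(K_n) ≥ (2 + o(1))·n. -/
theorem starChromaticIndex_completeGraph_lower_bound :
    (∀ (n b : ℕ) (c : Sym2 (Fin n) → Fin b),
        IsStarEdgeColoring (⊤ : SimpleGraph (Fin n)) c →
        (2 * (n : ℚ) * ((n : ℚ) - 1)) / ((n : ℚ) + 2) ≤ (b : ℚ)) ∧
    (∀ ε : ℝ, 0 < ε → ∃ N : ℕ, ∀ n : ℕ, N ≤ n →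
        (2 - ε) * (n : ℝ) ≤ (starChromaticIndex (⊤ : SimpleGraph (Fin n)) : ℝ)) := by
  constructor
  · intro n b c hc
    rw [div_le_iff₀ (by positivity)]
    rcases n with _ | n
    · simp
    · simpa [mul_assoc] using (Nat.cast_le (α := ℚ)).2 hc.two_mul_card_mul_card_sub_one_le
  · intro ε hε
    refine ⟨⌈6 / ε⌉₊, fun n hn => ?_⟩
    have hεn : 6 ≤ ε * n := by
      rw [← div_le_iff₀' hε]
      exact (Nat.le_ceil _).trans (Nat.cast_le.2 hn)
    have hχ := (Nat.cast_le (α := ℝ)).2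
      (two_mul_card_mul_card_sub_one_le_starChromaticIndex_top_mul (V := Fin n))
    rcases n with _ | n
    · simp
    · push_cast [Fintype.card_fin] at hχ hεn ⊢
      nlinarith
end

section
/- The star chromatic index of the complete bipartite graph K_{n,n} is at most χ'_s(K_n) + n. -/
open SimpleGraph

/-!
Fold `K_{n,n}` onto the complete graph on `Fin n` with a loop at every vertex (`aᵢ, bᵢ ↦ i`),
and colour that looped graph by a star colouring of `K_n` together with a new colour `i` on the
loop at `i`; pulled back along the fold, this is the colouring of the construction.

A proper edge colouring is star iff no walk `w₀ w₁ w₂ w₃ w₄` with `w₀ ≠ w₂`, `w₁ ≠ w₃`,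
`w₂ ≠ w₄` has alternating colours: such a walk is a path, a 4-cycle, or (if `w₀ = w₃` or
`w₁ = w₄`) two equally coloured edges at one vertex. Vertices of `K_{n,n}` at distance two fold
to distinct vertices, so an alternating walk folds to one in the looped graph, and since loop
colours are used only once, it avoids the loops and is an alternating walk of `K_n`.
-/

namespace SimpleGraph.Walk

variable {V : Type*} {G : SimpleGraph V}

theorem exists_eq_cons₄_of_length_eq_four {u v : V} (p : G.Walk u v) (hp : p.length = 4) :
    ∃ (w₁ w₂ w₃ : V) (h₀ : G.Adj u w₁) (h₁ : G.Adj w₁ w₂) (h₂ : G.Adj w₂ w₃) (h₃ : G.Adj w₃ v),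
      p = .cons h₀ (.cons h₁ (.cons h₂ (.cons h₃ .nil))) := by
  match p, hp with
  | .cons h₀ (.cons h₁ (.cons h₂ (.cons h₃ .nil))), _ => exact ⟨_, _, _, h₀, h₁, h₂, h₃, rfl⟩

end SimpleGraph.Walk

section StarCharacterization

variable {V α β : Type*} {G : SimpleGraph V} {c : Sym2 V → α}

theorem colors_alternate_of_bicolored
    (hproper : ∀ u v w, G.Adj u v → G.Adj u w → v ≠ w → c s(u, v) ≠ c s(u, w))
    {w₀ w₁ w₂ w₃ w₄ : V} (h₀ : G.Adj w₀ w₁) (h₁ : G.Adj w₁ w₂) (h₂ : G.Adj w₂ w₃)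
    (h₃ : G.Adj w₃ w₄) (h₀₂ : w₀ ≠ w₂) (h₁₃ : w₁ ≠ w₃) (h₂₄ : w₂ ≠ w₄) {a b : α}
    (hab : ∀ e ∈ [s(w₀, w₁), s(w₁, w₂), s(w₂, w₃), s(w₃, w₄)], c e = a ∨ c e = b) :
    c s(w₀, w₁) = c s(w₂, w₃) ∧ c s(w₁, w₂) = c s(w₃, w₄) := by
  have d₀ : c s(w₀, w₁) ≠ c s(w₁, w₂) := by
    rw [Sym2.eq_swap]; exact hproper _ _ _ h₀.symm h₁ h₀₂
  have d₁ : c s(w₁, w₂) ≠ c s(w₂, w₃) := by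
    rw [Sym2.eq_swap]; exact hproper _ _ _ h₁.symm h₂ h₁₃
  have d₂ : c s(w₂, w₃) ≠ c s(w₃, w₄) := by
    rw [Sym2.eq_swap]; exact hproper _ _ _ h₂.symm h₃ h₂₄
  simp only [List.forall_mem_cons] at hab
  obtain ⟨e₀ | e₀, e₁ | e₁, e₂ | e₂, e₃ | e₃, -⟩ := hab <;> simp_all

theorem IsStarEdgeColoring.ne_of_adj (hc : IsStarEdgeColoring G c) {u v w : V}
    (huv : G.Adj u v) (huw : G.Adj u w) (hvw : v ≠ w) : c s(u, v) ≠ c s(u, w) :=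
  hc.1 _ huv _ huw (fun h => hvw (Sym2.congr_right.mp h))
    ⟨u, Sym2.mem_mk_left _ _, Sym2.mem_mk_left _ _⟩

theorem IsStarEdgeColoring.not_alternating (hc : IsStarEdgeColoring G c) {w₀ w₁ w₂ w₃ w₄ : V}
    (h₀ : G.Adj w₀ w₁) (h₁ : G.Adj w₁ w₂) (h₂ : G.Adj w₂ w₃) (h₃ : G.Adj w₃ w₄)
    (h₀₂ : w₀ ≠ w₂) (h₁₃ : w₁ ≠ w₃) (h₂₄ : w₂ ≠ w₄) (e₀₂ : c s(w₀, w₁) = c s(w₂, w₃)) :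
    c s(w₁, w₂) ≠ c s(w₃, w₄) := by
  intro e₁₃
  by_cases h₀₃ : w₀ = w₃
  · subst h₀₃
    exact hc.ne_of_adj h₀ h₂.symm h₁.ne (e₀₂.trans (congrArg c Sym2.eq_swap))
  by_cases h₁₄ : w₁ = w₄
  · subst h₁₄
    exact hc.ne_of_adj h₁ h₃.symm h₂.ne (e₁₃.trans (congrArg c Sym2.eq_swap))
  have hbi : ∀ e ∈ [s(w₀, w₁), s(w₁, w₂), s(w₂, w₃), s(w₃, w₄)],
      c e = c s(w₀, w₁) ∨ c e = c s(w₁, w₂) := by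
    simp [e₀₂, e₁₃]
  by_cases h₀₄ : w₀ = w₄
  · subst h₀₄
    refine hc.2.2 w₀ (.cons h₀ (.cons h₁ (.cons h₂ (.cons h₃ .nil)))) ?_ rfl ⟨_, _, hbi⟩
    simp [Walk.cons_isCycle_iff, Walk.cons_isPath_iff, h₀.ne, h₁.ne, h₂.ne, h₃.ne, h₀₂, h₁₃,
      h₁₄, h₀₃, h₀₂.symm]
  · refine hc.2.1 w₀ w₄ (.cons h₀ (.cons h₁ (.cons h₂ (.cons h₃ .nil)))) ?_ rfl ⟨_, _, hbi⟩
    simp [Walk.cons_isPath_iff, h₀.ne, h₁.ne, h₂.ne, h₃.ne, h₀₂, h₁₃, h₂₄, h₀₃, h₁₄, h₀₄]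

theorem isStarEdgeColoring_of_not_alternating
    (hproper : ∀ u v w, G.Adj u v → G.Adj u w → v ≠ w → c s(u, v) ≠ c s(u, w))
    (halt : ∀ w₀ w₁ w₂ w₃ w₄, G.Adj w₀ w₁ → G.Adj w₁ w₂ → G.Adj w₂ w₃ → G.Adj w₃ w₄ →
      w₀ ≠ w₂ → w₁ ≠ w₃ → w₂ ≠ w₄ → c s(w₀, w₁) = c s(w₂, w₃) → c s(w₁, w₂) ≠ c s(w₃, w₄)) :
    IsStarEdgeColoring G c := by
  refine ⟨?_, ?_, ?_⟩
  · intro e₁ he₁ e₂ he₂ hne ⟨v, hv₁, hv₂⟩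
    obtain ⟨w₁, rfl⟩ := Sym2.mem_iff_exists.mp hv₁
    obtain ⟨w₂, rfl⟩ := Sym2.mem_iff_exists.mp hv₂
    exact hproper v w₁ w₂ he₁ he₂ (fun h => hne (h ▸ rfl))
  · rintro u v p hp hl ⟨a, b, hab⟩
    obtain ⟨w₁, w₂, w₃, h₀, h₁, h₂, h₃, rfl⟩ := p.exists_eq_cons₄_of_length_eq_four hl
    have hnd := hp.support_nodup
    simp only [Walk.support_cons, Walk.support_nil, List.nodup_cons, List.mem_cons,
      List.not_mem_nil, not_or] at hnd
    obtain ⟨⟨-, h₀₂, -⟩, ⟨-, h₁₃, -⟩, ⟨-, h₂₄, -⟩, -⟩ := hnd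
    obtain ⟨e₀₂, e₁₃⟩ := colors_alternate_of_bicolored hproper h₀ h₁ h₂ h₃ h₀₂ h₁₃ h₂₄ hab
    exact halt _ _ _ _ _ h₀ h₁ h₂ h₃ h₀₂ h₁₃ h₂₄ e₀₂ e₁₃
  · rintro u p hp hl ⟨a, b, hab⟩
    obtain ⟨w₁, w₂, w₃, h₀, h₁, h₂, h₃, hp'⟩ := p.exists_eq_cons₄_of_length_eq_four hl
    subst hp'
    have hnd := hp.support_nodup
    simp only [Walk.support_cons, Walk.support_nil, List.tail_cons, List.nodup_cons,
      List.mem_cons, List.not_mem_nil, not_or] at hnd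
    obtain ⟨⟨-, h₁₃, -⟩, ⟨-, h₂₀, -⟩, -⟩ := hnd
    obtain ⟨e₀₂, e₁₃⟩ :=
      colors_alternate_of_bicolored hproper h₀ h₁ h₂ h₃ (Ne.symm h₂₀) h₁₃ h₂₀ hab
    exact halt _ _ _ _ _ h₀ h₁ h₂ h₃ (Ne.symm h₂₀) h₁₃ h₂₀ e₀₂ e₁₃

theorem IsStarEdgeColoring.comp_injective (hc : IsStarEdgeColoring G c) {f : α → β}
    (hf : Function.Injective f) : IsStarEdgeColoring G (f ∘ c) :=
  isStarEdgeColoring_of_not_alternating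
    (fun _ _ _ huv huw hvw h => hc.ne_of_adj huv huw hvw (hf h))
    (fun _ _ _ _ _ h₀ h₁ h₂ h₃ h₀₂ h₁₃ h₂₄ e₀₂ e₁₃ =>
      hc.not_alternating h₀ h₁ h₂ h₃ h₀₂ h₁₃ h₂₄ (hf e₀₂) (hf e₁₃))

theorem isStarEdgeColoring_of_injective_s5 (hc : Function.Injective c) : IsStarEdgeColoring G c :=
  isStarEdgeColoring_of_not_alternating
    (fun _ _ _ _ _ hvw h => hvw (Sym2.congr_right.mp (hc h)))
    fun _ _ _ _ _ _ h₁ _ _ h₀₂ _ _ e₀₂ _ => by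
      rcases Sym2.eq_iff.mp (hc e₀₂) with ⟨h, -⟩ | ⟨-, h⟩
      exacts [h₀₂ h, h₁.ne h]

theorem exists_isStarEdgeColoring_starChromaticIndex [Finite V] (G : SimpleGraph V) :
    ∃ c : Sym2 V → Fin (starChromaticIndex G), IsStarEdgeColoring G c := by
  obtain ⟨k, ⟨e⟩⟩ := Finite.exists_equiv_fin (Sym2 V)
  exact Nat.sInf_mem (s := {k | ∃ c : Sym2 V → Fin k, IsStarEdgeColoring G c})
    ⟨k, e, isStarEdgeColoring_of_injective_s5 e.injective⟩

end StarCharacterization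

section Looped

variable {V W α β : Type*}

/-- The hypotheses of `isStarEdgeColoring_of_not_alternating` for the complete graph with a loop
at every vertex, whose edges are all of `Sym2 V`. -/
def IsLoopedStarColoring (d : Sym2 V → β) : Prop :=
  (∀ x y y', y ≠ y' → d s(x, y) ≠ d s(x, y')) ∧
  ∀ x₀ x₁ x₂ x₃ x₄, x₀ ≠ x₂ → x₁ ≠ x₃ → x₂ ≠ x₄ →
    d s(x₀, x₁) = d s(x₂, x₃) → d s(x₁, x₂) ≠ d s(x₃, x₄)

theorem IsLoopedStarColoring.isStarEdgeColoring_comp_map {d : Sym2 V → β}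
    (hd : IsLoopedStarColoring d) {G : SimpleGraph W} {f : W → V}
    (hf : ∀ u w v, G.Adj u w → G.Adj w v → u ≠ v → f u ≠ f v) :
    IsStarEdgeColoring G (d ∘ Sym2.map f) :=
  isStarEdgeColoring_of_not_alternating
    (fun u v w huv huw hvw => hd.1 (f u) (f v) (f w) (hf v u w huv.symm huw hvw))
    fun _ _ _ _ _ h₀ h₁ h₂ h₃ h₀₂ h₁₃ h₂₄ =>
      hd.2 _ _ _ _ _ (hf _ _ _ h₀ h₁ h₀₂) (hf _ _ _ h₁ h₂ h₁₃) (hf _ _ _ h₂ h₃ h₂₄)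

variable [DecidableEq V] {c : Sym2 V → α}

def extendDiag (c : Sym2 V → α) : Sym2 V → α ⊕ V :=
  Sym2.lift ⟨fun x y => if x = y then .inr x else .inl (c s(x, y)), fun x y => by
    by_cases h : x = y
    · simp [h]
    · simp [h, Ne.symm h, Sym2.eq_swap]⟩

theorem extendDiag_eq_extendDiag_iff {a b x y : V} :
    extendDiag c s(a, b) = extendDiag c s(x, y) ↔
      (a = b ∧ x = y ∧ a = x) ∨ (a ≠ b ∧ x ≠ y ∧ c s(a, b) = c s(x, y)) := by
  by_cases hab : a = b <;> by_cases hxy : x = y <;> simp [extendDiag, hab, hxy]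

theorem IsStarEdgeColoring.isLoopedStarColoring_extendDiag
    (hc : IsStarEdgeColoring (⊤ : SimpleGraph V) c) : IsLoopedStarColoring (extendDiag c) := by
  refine ⟨fun x y y' hyy' h => ?_, fun x₀ x₁ x₂ x₃ x₄ h₀₂ h₁₃ h₂₄ e₀₂ e₁₃ => ?_⟩
  · rcases extendDiag_eq_extendDiag_iff.mp h with ⟨rfl, rfl, -⟩ | ⟨hxy, hxy', h⟩
    exacts [hyy' rfl, hc.ne_of_adj hxy hxy' hyy' h]
  · rcases extendDiag_eq_extendDiag_iff.mp e₀₂ with ⟨-, -, h⟩ | ⟨h₀₁, h₂₃, e₀₂⟩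
    · exact h₀₂ h
    rcases extendDiag_eq_extendDiag_iff.mp e₁₃ with ⟨-, -, h⟩ | ⟨h₁₂, h₃₄, e₁₃⟩
    · exact h₁₃ h
    exact hc.not_alternating h₀₁ h₁₂ h₂₃ h₃₄ h₀₂ h₁₃ h₂₄ e₀₂ e₁₃

end Looped

theorem completeBipartiteGraph_elim_ne_of_adj_of_adj {V : Type*} {u w v : V ⊕ V}
    (h₁ : (completeBipartiteGraph V V).Adj u w) (h₂ : (completeBipartiteGraph V V).Adj w v)
    (huv : u ≠ v) : Sum.elim id id u ≠ Sum.elim id id v := by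
  rcases u with u | u <;> rcases w with w | w <;> rcases v with v | v <;> simp_all

theorem IsStarEdgeColoring.completeBipartite {V α : Type*} [DecidableEq V] {c : Sym2 V → α}
    (hc : IsStarEdgeColoring (⊤ : SimpleGraph V) c) :
    IsStarEdgeColoring (completeBipartiteGraph V V) (extendDiag c ∘ Sym2.map (Sum.elim id id)) :=
  hc.isLoopedStarColoring_extendDiag.isStarEdgeColoring_comp_map fun _ _ _ =>
    completeBipartiteGraph_elim_ne_of_adj_of_adj

/-- χ'_s(K_{n,n}) ≤ χ'_s(K_n) + n. -/
theorem starChromaticIndex_completeBipartite_le (n : ℕ) :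
    starChromaticIndex (completeBipartiteGraph (Fin n) (Fin n)) ≤
      starChromaticIndex (⊤ : SimpleGraph (Fin n)) + n := by
  obtain ⟨c, hc⟩ := exists_isStarEdgeColoring_starChromaticIndex (⊤ : SimpleGraph (Fin n))
  apply Nat.sInf_le
  exact ⟨_, hc.completeBipartite.comp_injective finSumFinEquiv.injective⟩
end

section
/- The 3-dimensional hypercube graph Q_3 admits a star edge-coloring with 4 colors; hence χ'_s(Q_3) = 4. -/
open SimpleGraph

/-- The 3-dimensional hypercube graph: vertices are {0,1}³, adjacency is
differing in exactly one coordinate. -/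
def cubeQ3 : SimpleGraph (Fin 3 → Bool) where
  Adj x y := ∃! i, x i ≠ y i
  symm := by
    constructor
    rintro x y ⟨i, hi, hu⟩
    exact ⟨i, hi.symm, fun j hj => hu j hj.symm⟩
  loopless := by
    constructor
    rintro x ⟨i, hi, -⟩
    exact hi rfl

/-!
The upper bound is an explicit colouring, checked by enumerating the vertex sequences of the
paths of length 4 and the 4-cycles of `Q₃`.

The lower bound holds for every cubic graph. In a proper edge colouring with at most 3 colours
every colour appears at every vertex, so for two colours `a ≠ b` there is a walk
`v₀ v₁ v₂ v₃ v₄` whose edges are alternately coloured `a` and `b`. Properness makes `v₀, …, v₃`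
and `v₁, …, v₄` distinct, so this walk is a bicoloured path of length 4, or a bicoloured
4-cycle when `v₄ = v₀`.
-/

namespace SimpleGraph.Walk

variable {V : Type*} {G : SimpleGraph V}

theorem exists_eq_cons_of_length_eq_four {u v : V} (p : G.Walk u v) (hp : p.length = 4) :
    ∃ (x₁ x₂ x₃ : V) (h₀₁ : G.Adj u x₁) (h₁₂ : G.Adj x₁ x₂) (h₂₃ : G.Adj x₂ x₃) (h₃₄ : G.Adj x₃ v),
      p = cons h₀₁ (cons h₁₂ (cons h₂₃ (cons h₃₄ nil))) := by
  rcases p with _ | ⟨h₀₁, _ | ⟨h₁₂, _ | ⟨h₂₃, _ | ⟨h₃₄, _ | ⟨_, _⟩⟩⟩⟩⟩ <;> simp at hp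
  exact ⟨_, _, _, h₀₁, h₁₂, h₂₃, h₃₄, rfl⟩

end SimpleGraph.Walk

section StarEdgeColoring

variable {V α : Type*} {G : SimpleGraph V} {c : Sym2 V → α}

theorem forall_adjacent_edges_color_ne_iff :
    (∀ e₁ ∈ G.edgeSet, ∀ e₂ ∈ G.edgeSet, e₁ ≠ e₂ → (∃ v, v ∈ e₁ ∧ v ∈ e₂) → c e₁ ≠ c e₂) ↔
      ∀ v x, G.Adj v x → ∀ y, G.Adj v y → x ≠ y → c s(v, x) ≠ c s(v, y) := by
  refine ⟨fun h v x hx y hy hxy => ?_, ?_⟩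
  · exact h _ hx _ hy (Sym2.congr_right.not.2 hxy) ⟨v, Sym2.mem_mk_left _ _, Sym2.mem_mk_left _ _⟩
  · rintro h e₁ he₁ e₂ he₂ hne ⟨v, hv₁, hv₂⟩
    obtain ⟨x, rfl⟩ := Sym2.mem_iff_exists.1 hv₁
    obtain ⟨y, rfl⟩ := Sym2.mem_iff_exists.1 hv₂
    exact h v x he₁ y he₂ (fun hxy => hne (hxy ▸ rfl))

theorem forall_path_length_four_iff {P : List (Sym2 V) → Prop} :
    (∀ (u v : V) (p : G.Walk u v), p.IsPath → p.length = 4 → P p.edges) ↔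
      ∀ x₀ x₁, G.Adj x₀ x₁ → ∀ x₂, G.Adj x₁ x₂ → ∀ x₃, G.Adj x₂ x₃ → ∀ x₄, G.Adj x₃ x₄ →
        [x₀, x₁, x₂, x₃, x₄].Nodup → P [s(x₀, x₁), s(x₁, x₂), s(x₂, x₃), s(x₃, x₄)] := by
  refine ⟨fun h x₀ x₁ h₀₁ x₂ h₁₂ x₃ h₂₃ x₄ h₃₄ hnodup => ?_, fun h u v p hp hlen => ?_⟩
  · exact h _ _ (.cons h₀₁ (.cons h₁₂ (.cons h₂₃ (.cons h₃₄ .nil)))) (Walk.isPath_def _ |>.2 hnodup) rfl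
  · obtain ⟨x₁, x₂, x₃, h₀₁, h₁₂, h₂₃, h₃₄, rfl⟩ := p.exists_eq_cons_of_length_eq_four hlen
    exact h u x₁ h₀₁ x₂ h₁₂ x₃ h₂₃ v h₃₄ hp.support_nodup

theorem forall_cycle_length_four_iff {P : List (Sym2 V) → Prop} :
    (∀ (u : V) (p : G.Walk u u), p.IsCycle → p.length = 4 → P p.edges) ↔
      ∀ x₀ x₁, G.Adj x₀ x₁ → ∀ x₂, G.Adj x₁ x₂ → ∀ x₃, G.Adj x₂ x₃ → G.Adj x₃ x₀ →
        [x₀, x₁, x₂, x₃].Nodup → P [s(x₀, x₁), s(x₁, x₂), s(x₂, x₃), s(x₃, x₀)] := by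
  refine ⟨fun h x₀ x₁ h₀₁ x₂ h₁₂ x₃ h₂₃ h₃₀ hnodup => ?_, fun h u p hp hlen => ?_⟩
  · have hnodup' : [x₁, x₂, x₃, x₀].Nodup := (List.nodup_rotate (n := 1)).2 hnodup
    refine h _ (.cons h₀₁ (.cons h₁₂ (.cons h₂₃ (.cons h₃₀ .nil)))) ?_ rfl
    refine (Walk.cons_isCycle_iff _ _).2 ⟨Walk.isPath_def _ |>.2 hnodup', ?_⟩
    simp_all
  · obtain ⟨x₁, x₂, x₃, h₀₁, h₁₂, h₂₃, h₃₀, rfl⟩ := p.exists_eq_cons_of_length_eq_four hlen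
    exact h u x₁ h₀₁ x₂ h₁₂ x₃ h₂₃ h₃₀ ((List.nodup_rotate (l := [u, x₁, x₂, x₃]) (n := 1)).1 hp.support_nodup)

theorem isStarEdgeColoring_iff :
    IsStarEdgeColoring G c ↔
      (∀ v x, G.Adj v x → ∀ y, G.Adj v y → x ≠ y → c s(v, x) ≠ c s(v, y)) ∧
      (∀ x₀ x₁, G.Adj x₀ x₁ → ∀ x₂, G.Adj x₁ x₂ → ∀ x₃, G.Adj x₂ x₃ → ∀ x₄, G.Adj x₃ x₄ →
        [x₀, x₁, x₂, x₃, x₄].Nodup →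
        ¬∃ a b, ∀ e ∈ [s(x₀, x₁), s(x₁, x₂), s(x₂, x₃), s(x₃, x₄)], c e = a ∨ c e = b) ∧
      (∀ x₀ x₁, G.Adj x₀ x₁ → ∀ x₂, G.Adj x₁ x₂ → ∀ x₃, G.Adj x₂ x₃ → G.Adj x₃ x₀ →
        [x₀, x₁, x₂, x₃].Nodup →
        ¬∃ a b, ∀ e ∈ [s(x₀, x₁), s(x₁, x₂), s(x₂, x₃), s(x₃, x₀)], c e = a ∨ c e = b) :=
  and_congr forall_adjacent_edges_color_ne_iff <| and_congr
    (forall_path_length_four_iff (P := fun l => ¬∃ a b, ∀ e ∈ l, c e = a ∨ c e = b))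
    (forall_cycle_length_four_iff (P := fun l => ¬∃ a b, ∀ e ∈ l, c e = a ∨ c e = b))

theorem IsStarEdgeColoring.eq_of_color_eq_s8 (hc : IsStarEdgeColoring G c) {v x y : V}
    (hx : G.Adj v x) (hy : G.Adj v y) (h : c s(v, x) = c s(v, y)) : x = y :=
  by_contra fun hxy => (isStarEdgeColoring_iff.1 hc).1 v x hx y hy hxy h

theorem IsStarEdgeColoring.degree_le_card [Fintype α] [G.LocallyFinite]
    (hc : IsStarEdgeColoring G c) (v : V) : G.degree v ≤ Fintype.card α := by
  rw [← G.card_neighborSet_eq_degree]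
  exact Fintype.card_le_of_injective (fun w : G.neighborSet v => c s(v, w))
    fun x y h => Subtype.ext (hc.eq_of_color_eq_s8 x.2 y.2 h)

theorem IsStarEdgeColoring.exists_adj_color_eq [Fintype α] [G.LocallyFinite] {d : ℕ}
    (hc : IsStarEdgeColoring G c) (hG : G.IsRegularOfDegree d) (hα : Fintype.card α ≤ d)
    (v : V) (a : α) : ∃ w, G.Adj v w ∧ c s(v, w) = a := by
  let f : G.neighborSet v → α := fun w => c s(v, w)
  have hf : f.Injective := fun x y h => Subtype.ext (hc.eq_of_color_eq_s8 x.2 y.2 h)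
  have hcard : Fintype.card (G.neighborSet v) = Fintype.card α := by
    rw [G.card_neighborSet_eq_degree]
    exact le_antisymm (hc.degree_le_card v) (hG v ▸ hα)
  obtain ⟨w, hw⟩ := ((Fintype.bijective_iff_injective_and_card f).2 ⟨hf, hcard⟩).2 a
  exact ⟨w, w.2, hw⟩

theorem SimpleGraph.IsRegularOfDegree.not_isStarEdgeColoring [Fintype α] [G.LocallyFinite]
    [Nonempty V] (hG : G.IsRegularOfDegree 3) (hα : Fintype.card α ≤ 3) : ¬IsStarEdgeColoring G c := by
  intro hc
  obtain ⟨-, hpath, hcycle⟩ := isStarEdgeColoring_iff.1 hc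
  obtain ⟨v₀⟩ := ‹Nonempty V›
  obtain ⟨a, b, hab⟩ := Fintype.exists_pair_of_one_lt_card (α := α) <| by
    have := hc.degree_le_card v₀
    rw [hG v₀] at this
    omega
  obtain ⟨v₁, h₀₁, c₀₁⟩ := hc.exists_adj_color_eq hG hα v₀ a
  obtain ⟨v₂, h₁₂, c₁₂⟩ := hc.exists_adj_color_eq hG hα v₁ b
  obtain ⟨v₃, h₂₃, c₂₃⟩ := hc.exists_adj_color_eq hG hα v₂ a
  obtain ⟨v₄, h₃₄, c₃₄⟩ := hc.exists_adj_color_eq hG hα v₃ b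
  have h₀₂ : v₀ ≠ v₂ := by
    rintro rfl
    exact hab (by rw [← c₀₁, ← c₁₂, Sym2.eq_swap])
  have h₁₃ : v₁ ≠ v₃ := by
    rintro rfl
    exact hab (by rw [← c₂₃, ← c₁₂, Sym2.eq_swap])
  have h₂₄ : v₂ ≠ v₄ := by
    rintro rfl
    exact hab (by rw [← c₂₃, ← c₃₄, Sym2.eq_swap])
  have h₀₃ : v₀ ≠ v₃ := by
    rintro rfl
    exact h₁₂.ne (hc.eq_of_color_eq_s8 h₀₁ h₂₃.symm (by rw [c₀₁, Sym2.eq_swap, c₂₃]))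
  have h₁₄ : v₁ ≠ v₄ := by
    rintro rfl
    exact h₂₃.ne (hc.eq_of_color_eq_s8 h₁₂ h₃₄.symm (by rw [c₁₂, Sym2.eq_swap, c₃₄]))
  by_cases h₀₄ : v₀ = v₄
  · subst h₀₄
    exact hcycle v₀ v₁ h₀₁ v₂ h₁₂ v₃ h₂₃ h₃₄ (by simp [h₀₁.ne, h₀₂, h₀₃, h₁₂.ne, h₁₃, h₂₃.ne])
      ⟨a, b, by simp [c₀₁, c₁₂, c₂₃, c₃₄]⟩
  · exact hpath v₀ v₁ h₀₁ v₂ h₁₂ v₃ h₂₃ v₄ h₃₄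
      (by simp [h₀₁.ne, h₀₂, h₀₃, h₀₄, h₁₂.ne, h₁₃, h₁₄, h₂₃.ne, h₂₄, h₃₄.ne])
      ⟨a, b, by simp [c₀₁, c₁₂, c₂₃, c₃₄]⟩

theorem SimpleGraph.IsRegularOfDegree.four_le_starChromaticIndex [G.LocallyFinite]
    [Nonempty V] (hG : G.IsRegularOfDegree 3)
    (h : ∃ k, ∃ c : Sym2 V → Fin k, IsStarEdgeColoring G c) : 4 ≤ starChromaticIndex G :=
  le_csInf h fun k ⟨c, hc⟩ => not_lt.1 fun hk =>
    hG.not_isStarEdgeColoring (by rw [Fintype.card_fin]; omega) hc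

end StarEdgeColoring

instance : DecidableRel cubeQ3.Adj := fun x y =>
  decidable_of_iff (∃ i, x i ≠ y i ∧ ∀ j, x j ≠ y j → j = i) Iff.rfl

theorem cubeQ3_isRegularOfDegree_three : cubeQ3.IsRegularOfDegree 3 := by
  unfold IsRegularOfDegree
  decide +kernel

/-- The edge `s(x, y)` in direction `i` is coloured by its two fixed coordinates
`(p, q) = (x (i + 1), x (i + 2))`: colour `i`, `i + 1`, `i + 2` for `(p, q)` equal to `(0, 0)`,
`(0, 1)`, `(1, 1)`, and colour `3` for `(1, 0)`. A cyclic shift of the coordinates permutes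
colours `0, 1, 2` cyclically and fixes colour `3`. -/
def cubeQ3Coloring : Sym2 (Fin 3 → Bool) → Fin 4 :=
  Sym2.lift ⟨fun x y =>
    let i : Fin 3 := if x 0 ≠ y 0 then 0 else if x 1 ≠ y 1 then 1 else 2
    match x (i + 1) && y (i + 1), x (i + 2) && y (i + 2) with
    | false, false => i.castSucc
    | false, true => (i + 1).castSucc
    | true, true => (i + 2).castSucc
    | true, false => 3,
    fun x y => by simp only [Bool.and_comm, ne_comm]⟩

theorem isStarEdgeColoring_cubeQ3Coloring : IsStarEdgeColoring cubeQ3 cubeQ3Coloring :=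
  isStarEdgeColoring_iff.2 ⟨by decide +kernel, by decide +kernel, by decide +kernel⟩

/-- Q₃ has a star edge-coloring with 4 colors, and χ'_s(Q₃) = 4. -/
theorem cubeQ3_star_four_coloring :
    (∃ c : Sym2 (Fin 3 → Bool) → Fin 4, IsStarEdgeColoring cubeQ3 c) ∧
      starChromaticIndex cubeQ3 = 4 := by
  have hc := isStarEdgeColoring_cubeQ3Coloring
  refine ⟨⟨_, hc⟩, le_antisymm (Nat.sInf_le ⟨_, hc⟩) ?_⟩
  exact cubeQ3_isRegularOfDegree_three.four_le_starChromaticIndex ⟨4, _, hc⟩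
end

section
/- Let G and H be graphs and let F: V(G) → V(H) be a covering map (a graph homomorphism that is bijective from the neighborhood of each vertex v of G onto the neighborhood of F(v)). If c is a star edge-coloring of H, then the lifted coloring assigning each edge uv of G the color c(F(u)F(v)) is a star edge-coloring of G. In particular, χ'_s(G) ≤ χ'_s(H). -/
open SimpleGraph

/-- A covering map of graphs: a homomorphism that is bijective between the
neighborhood of each vertex and the neighborhood of its image. -/
def IsGraphCoveringMap {V W : Type*} (G : SimpleGraph V) (H : SimpleGraph W)
    (F : V → W) : Prop :=
  (∀ ⦃u v⦄, G.Adj u v → H.Adj (F u) (F v)) ∧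
  ∀ v, Set.BijOn F (G.neighborSet v) (H.neighborSet (F v))

/-- Any walk of length 4 is an explicit concatenation of 4 edges. -/
lemma walk_len4_explicit {V : Type*} {G : SimpleGraph V} {u v : V} (p : G.Walk u v)
    (h : p.length = 4) :
    ∃ (a b d : V) (h1 : G.Adj u a) (h2 : G.Adj a b) (h3 : G.Adj b d) (h4 : G.Adj d v),
      p = Walk.cons h1 (Walk.cons h2 (Walk.cons h3 (Walk.cons h4 Walk.nil))) := by
  cases p with
  | nil => simp at h
  | cons h1 p =>
    cases p with
    | nil => simp at h
    | cons h2 p =>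
      cases p with
      | nil => simp at h
      | cons h3 p =>
        cases p with
        | nil => simp at h
        | cons h4 p =>
          cases p with
          | nil => exact ⟨_, _, _, h1, h2, h3, h4, rfl⟩
          | cons h5 p =>
            exfalso
            simp only [SimpleGraph.Walk.length_cons] at h
            omega

/-- An explicit 4-cycle. -/
lemma isCycle4 {W : Type*} {H : SimpleGraph W} {w0 w1 w2 w3 : W}
    (H1 : H.Adj w0 w1) (H2 : H.Adj w1 w2) (H3 : H.Adj w2 w3) (H4 : H.Adj w3 w0)
    (h02 : w0 ≠ w2) (h13 : w1 ≠ w3) :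
    (Walk.cons H1 (Walk.cons H2 (Walk.cons H3 (Walk.cons H4 Walk.nil)))).IsCycle := by
  have n01 : w0 ≠ w1 := H1.ne
  have n12 : w1 ≠ w2 := H2.ne
  have n23 : w2 ≠ w3 := H3.ne
  have n30 : w3 ≠ w0 := H4.ne
  have n10 : w1 ≠ w0 := n01.symm
  have n21 : w2 ≠ w1 := n12.symm
  have n32 : w3 ≠ w2 := n23.symm
  have n03 : w0 ≠ w3 := n30.symm
  have h20 : w2 ≠ w0 := h02.symm
  have h31 : w3 ≠ w1 := h13.symm
  rw [SimpleGraph.Walk.isCycle_def]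
  refine ⟨⟨?_⟩, by simp, ?_⟩
  · simp only [SimpleGraph.Walk.edges_cons, SimpleGraph.Walk.edges_nil,
      List.nodup_cons, List.mem_cons, List.not_mem_nil, or_false, List.nodup_nil,
      and_true, Sym2.eq_iff, not_or]
    tauto
  · simp only [SimpleGraph.Walk.support_cons, SimpleGraph.Walk.support_nil,
      List.tail_cons, List.nodup_cons, List.mem_cons, List.not_mem_nil,
      List.mem_singleton, List.nodup_nil, not_or]
    tauto

/-- An explicit 4-edge path. -/
lemma isPath4 {W : Type*} {H : SimpleGraph W} {w0 w1 w2 w3 w4 : W}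
    (H1 : H.Adj w0 w1) (H2 : H.Adj w1 w2) (H3 : H.Adj w2 w3) (H4 : H.Adj w3 w4)
    (h02 : w0 ≠ w2) (h03 : w0 ≠ w3) (h04 : w0 ≠ w4)
    (h13 : w1 ≠ w3) (h14 : w1 ≠ w4) (h24 : w2 ≠ w4) :
    (Walk.cons H1 (Walk.cons H2 (Walk.cons H3 (Walk.cons H4 Walk.nil)))).IsPath := by
  have n01 : w0 ≠ w1 := H1.ne
  have n12 : w1 ≠ w2 := H2.ne
  have n23 : w2 ≠ w3 := H3.ne
  have n34 : w3 ≠ w4 := H4.ne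
  rw [SimpleGraph.Walk.isPath_def]
  simp only [SimpleGraph.Walk.support_cons, SimpleGraph.Walk.support_nil,
    List.nodup_cons, List.mem_cons, List.not_mem_nil, List.mem_singleton,
    List.nodup_nil, not_or]
  tauto

/-- A list with at least 3 pairwise-distinct elements cannot be colored injectively
with only two colors. -/
lemma no_two_colors {β γ : Type*} (f : β → γ) (hf : Function.Injective f)
    (l : List β) (hl : l.Nodup) (hlen : 3 ≤ l.length) :
    ¬ ∃ a b, ∀ e ∈ l, f e = a ∨ f e = b := by
  rintro ⟨a, b, hab⟩
  match l, hl, hlen, hab with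
  | e1 :: e2 :: e3 :: t, hl, _, hab =>
    simp only [List.nodup_cons, List.mem_cons] at hl
    have h12 : e1 ≠ e2 := fun h => hl.1 (Or.inl h)
    have h13 : e1 ≠ e3 := fun h => hl.1 (Or.inr (Or.inl h))
    have h23 : e2 ≠ e3 := fun h => hl.2.1 (Or.inl h)
    have h1 := hab e1 (by simp)
    have h2 := hab e2 (by simp)
    have h3 := hab e3 (by simp)
    rcases h1 with h1 | h1 <;> rcases h2 with h2 | h2 <;> rcases h3 with h3 | h3 <;>
      first
        | exact h12 (hf (h1.trans h2.symm))
        | exact h13 (hf (h1.trans h3.symm))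
        | exact h23 (hf (h2.trans h3.symm))

/-- The lifting of a star edge-coloring through a covering map. -/
lemma isStarEdgeColoring_lift {V W : Type*} (G : SimpleGraph V) (H : SimpleGraph W)
    (F : V → W) (hF : IsGraphCoveringMap G H F) {α : Type*} (c : Sym2 W → α)
    (hc : IsStarEdgeColoring H c) :
    IsStarEdgeColoring G (fun e => c (Sym2.map F e)) := by
  obtain ⟨hhom, hbij⟩ := hF
  have hinj : ∀ v a b, G.Adj v a → G.Adj v b → F a = F b → a = b := by
    intro v a b ha hb h
    exact (hbij v).injOn ha hb h
  -- proper edge coloring facts in H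
  have prop : ∀ (x y z : W), H.Adj x y → H.Adj y z → x ≠ z →
      c s(x, y) ≠ c s(y, z) := by
    intro x y z hxy hyz hxz
    refine hc.1 _ hxy _ hyz ?_ ⟨y, by simp, by simp⟩
    intro h
    rw [Sym2.eq_iff] at h
    rcases h with ⟨h1, h2⟩ | ⟨h, -⟩
    · exact hxz (h1.trans h2)
    · exact hxz h
  refine ⟨?_, ?_, ?_⟩
  · -- properness
    rintro e₁ he₁ e₂ he₂ hne ⟨v, hv₁, hv₂⟩
    obtain ⟨x, rfl⟩ := Sym2.mem_iff_exists.mp hv₁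
    obtain ⟨y, rfl⟩ := Sym2.mem_iff_exists.mp hv₂
    rw [SimpleGraph.mem_edgeSet] at he₁ he₂
    simp only [Sym2.map_pair_eq]
    refine hc.1 _ (hhom he₁) _ (hhom he₂) ?_ ⟨F v, by simp, by simp⟩
    intro h
    rw [Sym2.eq_iff] at h
    rcases h with ⟨-, h⟩ | ⟨h, -⟩
    · exact hne (by rw [hinj v x y he₁ he₂ h])
    · exact (hhom he₂).ne h
  · -- no bicolored path of length 4
    rintro u v p hp hlen ⟨a, b, hab⟩
    obtain ⟨v1, v2, v3, h1, h2, h3, h4, rfl⟩ := walk_len4_explicit p hlen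
    rw [SimpleGraph.Walk.isPath_def] at hp
    simp only [SimpleGraph.Walk.support_cons, SimpleGraph.Walk.support_nil,
      List.nodup_cons, List.mem_cons, List.mem_singleton, List.not_mem_nil,
      not_or, List.nodup_nil] at hp
    simp only [SimpleGraph.Walk.edges_cons, SimpleGraph.Walk.edges_nil,
      List.mem_cons, List.not_mem_nil] at hab
    have c1 := hab _ (Or.inl rfl)
    have c2 := hab _ (Or.inr (Or.inl rfl))
    have c3 := hab _ (Or.inr (Or.inr (Or.inl rfl)))
    have c4 := hab _ (Or.inr (Or.inr (Or.inr (Or.inl rfl))))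
    simp only [Sym2.map_pair_eq] at c1 c2 c3 c4
    have H1 := hhom h1; have H2 := hhom h2; have H3 := hhom h3; have H4 := hhom h4
    obtain ⟨⟨-, nuv2, -, -⟩, ⟨-, nv13, -⟩, ⟨-, nv2v, -⟩, -⟩ := hp
    have w02 : F u ≠ F v2 := fun h => nuv2 (hinj v1 u v2 h1.symm h2 h)
    have w13 : F v1 ≠ F v3 := fun h => nv13 (hinj v2 v1 v3 h2.symm h3 h)
    have w24 : F v2 ≠ F v := fun h => nv2v (hinj v3 v2 v h3.symm h4 h)
    have d12 := prop _ _ _ H1 H2 w02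
    have d23 := prop _ _ _ H2 H3 w13
    have d34 := prop _ _ _ H3 H4 w24
    by_cases e03 : F u = F v3
    · -- edges 1 and 3 share the vertex F u = F v3, hence get distinct colors
      have d13 : c s(F u, F v1) ≠ c s(F v2, F v3) := by
        refine hc.1 _ (by exact hhom h1) _ (by exact hhom h3) ?_
          ⟨F u, by simp, by rw [e03]; simp⟩
        intro h
        rw [Sym2.eq_iff] at h
        rcases h with ⟨h, -⟩ | ⟨-, h⟩
        · exact w02 h
        · exact H2.ne h
      rcases c1 with c1 | c1 <;> rcases c2 with c2 | c2 <;> rcases c3 with c3 | c3 <;>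
        first
          | exact d12 (c1.trans c2.symm)
          | exact d13 (c1.trans c3.symm)
          | exact d23 (c2.trans c3.symm)
    · by_cases e14 : F v1 = F v
      · have d24 : c s(F v1, F v2) ≠ c s(F v3, F v) := by
          refine hc.1 _ (by exact hhom h2) _ (by exact hhom h4) ?_
            ⟨F v1, by simp, by rw [e14]; simp⟩
          intro h
          rw [Sym2.eq_iff] at h
          rcases h with ⟨h, -⟩ | ⟨-, h⟩
          · exact w13 h
          · exact H3.ne h
        rcases c2 with c2 | c2 <;> rcases c3 with c3 | c3 <;> rcases c4 with c4 | c4 <;>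
          first
            | exact d23 (c2.trans c3.symm)
            | exact d24 (c2.trans c4.symm)
            | exact d34 (c3.trans c4.symm)
      · by_cases e04 : F u = F v
        · -- image is a 4-cycle
          have H4' : H.Adj (F v3) (F u) := e04 ▸ H4
          refine hc.2.2 (F u)
            (Walk.cons H1 (Walk.cons H2 (Walk.cons H3 (Walk.cons H4' Walk.nil))))
            (isCycle4 H1 H2 H3 H4' w02 w13) (by simp) ⟨a, b, ?_⟩
          intro e he
          simp only [SimpleGraph.Walk.edges_cons, SimpleGraph.Walk.edges_nil,
            List.mem_cons, List.not_mem_nil, or_false] at he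
          rcases he with rfl | rfl | rfl | rfl
          · exact c1
          · exact c2
          · exact c3
          · rw [e04]; exact c4
        · -- image is a path
          refine hc.2.1 (F u) (F v)
            (Walk.cons H1 (Walk.cons H2 (Walk.cons H3 (Walk.cons H4 Walk.nil))))
            (isPath4 H1 H2 H3 H4 w02 e03 e04 w13 e14 w24) (by simp) ⟨a, b, ?_⟩
          intro e he
          simp only [SimpleGraph.Walk.edges_cons, SimpleGraph.Walk.edges_nil,
            List.mem_cons, List.not_mem_nil, or_false] at he
          rcases he with rfl | rfl | rfl | rfl
          · exact c1
          · exact c2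
          · exact c3
          · exact c4
  · -- no bicolored 4-cycle
    rintro u p hp hlen ⟨a, b, hab⟩
    obtain ⟨v1, v2, v3, h1, h2, h3, h4, rfl⟩ := walk_len4_explicit p hlen
    have hup := hp.2
    simp only [SimpleGraph.Walk.support_cons, SimpleGraph.Walk.support_nil,
      List.tail_cons, List.nodup_cons, List.mem_cons, List.mem_singleton,
      List.not_mem_nil, not_or, List.nodup_nil] at hup
    simp only [SimpleGraph.Walk.edges_cons, SimpleGraph.Walk.edges_nil,
      List.mem_cons, List.not_mem_nil] at hab
    have c1 := hab _ (Or.inl rfl)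
    have c2 := hab _ (Or.inr (Or.inl rfl))
    have c3 := hab _ (Or.inr (Or.inr (Or.inl rfl)))
    have c4 := hab _ (Or.inr (Or.inr (Or.inr (Or.inl rfl))))
    simp only [Sym2.map_pair_eq] at c1 c2 c3 c4
    have H1 := hhom h1; have H2 := hhom h2; have H3 := hhom h3; have H4 := hhom h4
    obtain ⟨⟨-, nv13, nv1u⟩, ⟨-, nv2u, -⟩, -⟩ := hup
    have huv2 : u ≠ v2 := fun h => nv2u (h ▸ rfl)
    have hv13 : v1 ≠ v3 := nv13
    have w02 : F u ≠ F v2 := fun h => huv2 (hinj v1 u v2 h1.symm h2 h)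
    have w13 : F v1 ≠ F v3 := fun h => hv13 (hinj v2 v1 v3 h2.symm h3 h)
    refine hc.2.2 (F u)
      (Walk.cons H1 (Walk.cons H2 (Walk.cons H3 (Walk.cons H4 Walk.nil))))
      (isCycle4 H1 H2 H3 H4 w02 w13) (by simp) ⟨a, b, ?_⟩
    intro e he
    simp only [SimpleGraph.Walk.edges_cons, SimpleGraph.Walk.edges_nil,
      List.mem_cons, List.not_mem_nil, or_false] at he
    rcases he with rfl | rfl | rfl | rfl
    · exact c1
    · exact c2
    · exact c3
    · exact c4

/-- star edge-colorings lift through covering maps, and hence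
χ'_s(G) ≤ χ'_s(H) whenever G covers H. -/
theorem isStarEdgeColoring_lift_of_covering {V W : Type*} [Fintype W]
    (G : SimpleGraph V) (H : SimpleGraph W) (F : V → W)
    (hF : IsGraphCoveringMap G H F) {α : Type*} (c : Sym2 W → α)
    (hc : IsStarEdgeColoring H c) :
    IsStarEdgeColoring G (fun e => c (Sym2.map F e)) ∧
      starChromaticIndex G ≤ starChromaticIndex H := by
  classical
  refine ⟨isStarEdgeColoring_lift G H F hF c hc, ?_⟩
  have hne : {k | ∃ c : Sym2 W → Fin k, IsStarEdgeColoring H c}.Nonempty := by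
    refine ⟨Fintype.card (Sym2 W), (Fintype.equivFin (Sym2 W)).toFun, ?_, ?_, ?_⟩
    · intro e₁ _ e₂ _ hne _ h
      exact hne ((Fintype.equivFin (Sym2 W)).injective h)
    · intro u v p hp hlen
      exact no_two_colors _ (Fintype.equivFin (Sym2 W)).injective p.edges
        hp.isTrail.edges_nodup (by rw [SimpleGraph.Walk.length_edges, hlen]; omega)
    · intro u p hp hlen
      exact no_two_colors _ (Fintype.equivFin (Sym2 W)).injective p.edges
        hp.isTrail.edges_nodup (by rw [SimpleGraph.Walk.length_edges, hlen]; omega)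
  obtain ⟨c', hc'⟩ := Nat.sInf_mem hne
  exact Nat.sInf_le ⟨fun e => c' (Sym2.map F e), isStarEdgeColoring_lift G H F hF c' hc'⟩
end

section
/- Let G be a simple cubic graph with a star 4-edge-coloring c using colors {1,2,3,4}. Define f(v) to be the unique color not appearing on the three edges incident to v. Then f is a proper vertex 4-coloring of G. -/
open SimpleGraph

private lemma starProp_ne {V : Type*} {G : SimpleGraph V} {c : Sym2 V → Fin 4}
    (hprop : ∀ e₁ ∈ G.edgeSet, ∀ e₂ ∈ G.edgeSet, e₁ ≠ e₂ → (∃ v, v ∈ e₁ ∧ v ∈ e₂) → c e₁ ≠ c e₂)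
    {x a b : V} (ha : G.Adj x a) (hb : G.Adj x b) (hab : a ≠ b) :
    c s(x, a) ≠ c s(x, b) := by
  refine hprop s(x, a) ha s(x, b) hb ?_ ⟨x, by simp, by simp⟩
  intro hEq
  rw [Sym2.eq_iff] at hEq
  rcases hEq with ⟨-, h⟩ | ⟨h, -⟩
  · exact hab h
  · exact G.ne_of_adj hb h

private lemma exists_nbr' {V : Type*} [Fintype V] (G : SimpleGraph V) [DecidableRel G.Adj]
    (hG : G.IsRegularOfDegree 3) (c : Sym2 V → Fin 4)
    (hprop : ∀ e₁ ∈ G.edgeSet, ∀ e₂ ∈ G.edgeSet, e₁ ≠ e₂ → (∃ v, v ∈ e₁ ∧ v ∈ e₂) → c e₁ ≠ c e₂)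
    (v : V) (d : Fin 4) (hd : ∀ w, G.Adj v w → c s(v, w) ≠ d)
    (e : Fin 4) (he : e ≠ d) : ∃ w, G.Adj v w ∧ c s(v, w) = e := by
  classical
  set s := (G.neighborFinset v).image (fun w => c s(v, w)) with hs
  have hinj : Set.InjOn (fun w => c s(v, w)) (G.neighborFinset v) := by
    intro w1 h1 w2 h2 heq
    rw [Finset.mem_coe, mem_neighborFinset] at h1 h2
    by_contra hne
    exact starProp_ne hprop h1 h2 hne heq
  have hcard : s.card = 3 := by
    rw [hs, Finset.card_image_of_injOn hinj, card_neighborFinset_eq_degree, hG v]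
  have hsub : s ⊆ ({d}ᶜ : Finset (Fin 4)) := by
    intro x hx
    obtain ⟨w, hw, rfl⟩ := Finset.mem_image.mp hx
    simp only [Finset.mem_compl, Finset.mem_singleton]
    exact hd w (by rwa [← mem_neighborFinset])
  have hceq : s = ({d}ᶜ : Finset (Fin 4)) := by
    refine Finset.eq_of_subset_of_card_le hsub ?_
    rw [hcard, Finset.card_compl]
    simp
  have : e ∈ s := by rw [hceq]; simp [he]
  obtain ⟨w, hw, hcw⟩ := Finset.mem_image.mp this
  exact ⟨w, by rwa [← mem_neighborFinset], hcw⟩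

private lemma bichrom' {V : Type*} (G : SimpleGraph V) (c : Sym2 V → Fin 4)
    (hpath : ∀ (u v : V) (p : G.Walk u v), p.IsPath → p.length = 4 →
      ¬ ∃ a b : Fin 4, ∀ e ∈ p.edges, c e = a ∨ c e = b)
    (hcyc : ∀ (u : V) (p : G.Walk u u), p.IsCycle → p.length = 4 →
      ¬ ∃ a b : Fin 4, ∀ e ∈ p.edges, c e = a ∨ c e = b)
    (v0 v1 v2 v3 v4 : V) (d1 d2 : Fin 4)
    (h01 : G.Adj v0 v1) (h12 : G.Adj v1 v2) (h23 : G.Adj v2 v3) (h34 : G.Adj v3 v4)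
    (h13 : v1 ≠ v3) (h02 : v0 ≠ v2) (h03 : v0 ≠ v3) (h24 : v2 ≠ v4) (h14 : v1 ≠ v4)
    (e01 : c s(v0,v1) = d1) (e12 : c s(v1,v2) = d2) (e23 : c s(v2,v3) = d1)
    (e34 : c s(v3,v4) = d2) : False := by
  have n01 := G.ne_of_adj h01
  have n12 := G.ne_of_adj h12
  have n23 := G.ne_of_adj h23
  have n34 := G.ne_of_adj h34
  by_cases h04 : v0 = v4
  · subst h04
    refine hcyc v0 (.cons h01 (.cons h12 (.cons h23 (.cons h34 .nil)))) ?_ (by simp) ?_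
    · rw [Walk.isCycle_def, Walk.isTrail_def]
      simp [Sym2.eq_iff]
      tauto
    · exact ⟨d1, d2, by simp; tauto⟩
  · refine hpath v0 v4 (.cons h01 (.cons h12 (.cons h23 (.cons h34 .nil)))) ?_ (by simp) ?_
    · rw [Walk.isPath_def]
      simp
      tauto
    · exact ⟨d1, d2, by simp; tauto⟩

/-- in a cubic graph with a star 4-edge-coloring c, the map f
sending each vertex to the color missing at it is a proper vertex coloring. -/
theorem missingColor_proper_coloring {V : Type*} [Fintype V]
    (G : SimpleGraph V) [DecidableRel G.Adj] (hG : G.IsRegularOfDegree 3)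
    (c : Sym2 V → Fin 4) (hc : IsStarEdgeColoring G c)
    (f : V → Fin 4) (hf : ∀ v w, G.Adj v w → c s(v, w) ≠ f v) :
    ∀ u v, G.Adj u v → f u ≠ f v := by
  obtain ⟨hprop, hpath, hcyc⟩ := hc
  intro u v huv hfuv
  have nuv : u ≠ v := G.ne_of_adj huv
  set α := f u with hα
  set c₀ := c s(u, v) with hc₀
  have hαu : ∀ w, G.Adj u w → c s(u, w) ≠ α := fun w h => hf u w h
  have hαv : ∀ w, G.Adj v w → c s(v, w) ≠ α := fun w h => hfuv ▸ hf v w h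
  have hc0α : c₀ ≠ α := hf u v huv
  -- pick the two remaining colors β γ
  have hcard2 : ({α, c₀}ᶜ : Finset (Fin 4)).card = 2 := by
    rw [Finset.card_compl, Finset.card_insert_of_notMem (by simp [Ne.symm hc0α]),
      Finset.card_singleton]
    simp
  obtain ⟨β, γ, hβγ, hset⟩ := Finset.card_eq_two.mp hcard2
  have hβmem : β ∈ ({α, c₀}ᶜ : Finset (Fin 4)) := by rw [hset]; simp
  have hγmem : γ ∈ ({α, c₀}ᶜ : Finset (Fin 4)) := by rw [hset]; simp
  simp only [Finset.mem_compl, Finset.mem_insert, Finset.mem_singleton, not_or] at hβmem hγmem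
  obtain ⟨hβα, hβc₀⟩ := hβmem
  obtain ⟨hγα, hγc₀⟩ := hγmem
  -- neighbors of u and v with colors β and γ
  obtain ⟨a, hua, hca⟩ := exists_nbr' G hG c hprop u α hαu β hβα
  obtain ⟨b, hub, hcb⟩ := exists_nbr' G hG c hprop u α hαu γ hγα
  obtain ⟨x, hvx, hcx⟩ := exists_nbr' G hG c hprop v α hαv β hβα
  obtain ⟨y, hvy, hcy⟩ := exists_nbr' G hG c hprop v α hαv γ hγα
  -- basic distinctness
  have hav : a ≠ v := by rintro rfl; exact hβc₀ (hca.symm.trans hc₀.symm)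
  have hbv : b ≠ v := by rintro rfl; exact hγc₀ (hcb.symm.trans hc₀.symm)
  have hxu : x ≠ u := by
    rintro rfl
    have : c s(v, x) = c₀ := by rw [hc₀, Sym2.eq_swap]
    exact hβc₀ (hcx.symm.trans this)
  have hyu : y ≠ u := by
    rintro rfl
    have : c s(v, y) = c₀ := by rw [hc₀, Sym2.eq_swap]
    exact hγc₀ (hcy.symm.trans this)
  have hax : a ≠ x := by
    rintro rfl
    have h1 : c s(a, u) = β := by rw [Sym2.eq_swap]; exact hca
    have h2 : c s(a, v) = β := by rw [Sym2.eq_swap]; exact hcx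
    exact starProp_ne hprop hua.symm hvx.symm nuv (h1.trans h2.symm)
  have hby : b ≠ y := by
    rintro rfl
    have h1 : c s(b, u) = γ := by rw [Sym2.eq_swap]; exact hcb
    have h2 : c s(b, v) = γ := by rw [Sym2.eq_swap]; exact hcy
    exact starProp_ne hprop hub.symm hvy.symm nuv (h1.trans h2.symm)
  have hxy : x ≠ y := by rintro rfl; exact hβγ (hcx.symm.trans hcy)
  -- no edge at x has color c₀
  have hx : ∀ z, G.Adj x z → c s(x, z) ≠ c₀ := by
    intro z hxz hcz
    have hzv : z ≠ v := by
      rintro rfl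
      have : c s(x, z) = β := by rw [Sym2.eq_swap]; exact hcx
      exact hβc₀ (this.symm.trans hcz)
    have hzu : z ≠ u := by
      rintro rfl
      have h1 : c s(z, x) = c₀ := by rw [Sym2.eq_swap]; exact hcz
      have h2 : c s(z, v) = c₀ := hc₀.symm
      exact starProp_ne hprop hxz.symm huv (fun h => (G.ne_of_adj hvx) h.symm) (h1.trans h2.symm)
    exact bichrom' G c hpath hcyc z x v u a c₀ β hxz.symm hvx.symm huv.symm hua
      hxu hzv hzu hav.symm hax.symm
      (by rw [Sym2.eq_swap]; exact hcz) (by rw [Sym2.eq_swap]; exact hcx)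
      (by rw [Sym2.eq_swap]) hca
  -- no edge at y has color c₀
  have hy : ∀ w, G.Adj y w → c s(y, w) ≠ c₀ := by
    intro w hyw hcw
    have hwv : w ≠ v := by
      rintro rfl
      have : c s(y, w) = γ := by rw [Sym2.eq_swap]; exact hcy
      exact hγc₀ (this.symm.trans hcw)
    have hwu : w ≠ u := by
      rintro rfl
      have h1 : c s(w, y) = c₀ := by rw [Sym2.eq_swap]; exact hcw
      have h2 : c s(w, v) = c₀ := hc₀.symm
      exact starProp_ne hprop hyw.symm huv (fun h => (G.ne_of_adj hvy) h.symm) (h1.trans h2.symm)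
    exact bichrom' G c hpath hcyc w y v u b c₀ γ hyw.symm hvy.symm huv.symm hub
      hyu hwv hwu hbv.symm hby.symm
      (by rw [Sym2.eq_swap]; exact hcw) (by rw [Sym2.eq_swap]; exact hcy)
      (by rw [Sym2.eq_swap]) hcb
  -- pick z neighbor of x with color γ, w neighbor of y with color β
  obtain ⟨z, hxz, hcz⟩ := exists_nbr' G hG c hprop x c₀ hx γ hγc₀
  obtain ⟨w, hyw, hcw⟩ := exists_nbr' G hG c hprop y c₀ hy β hβc₀
  -- final bicolored path/cycle w-y-v-x-z
  have hwv : w ≠ v := by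
    rintro rfl
    have : c s(y, w) = γ := by rw [Sym2.eq_swap]; exact hcy
    exact hβγ (hcw.symm.trans this)
  have hzv : z ≠ v := by
    rintro rfl
    have : c s(x, z) = β := by rw [Sym2.eq_swap]; exact hcx
    exact hβγ (this.symm.trans hcz)
  have hwx : w ≠ x := by
    rintro rfl
    have h1 : c s(w, y) = β := by rw [Sym2.eq_swap]; exact hcw
    have h2 : c s(w, v) = β := by rw [Sym2.eq_swap]; exact hcx
    exact starProp_ne hprop hyw.symm hvx.symm (fun h => (G.ne_of_adj hvy) h.symm) (h1.trans h2.symm)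
  have hzy : z ≠ y := by
    rintro rfl
    have h1 : c s(z, x) = γ := by rw [Sym2.eq_swap]; exact hcz
    have h2 : c s(z, v) = γ := by rw [Sym2.eq_swap]; exact hcy
    exact starProp_ne hprop hxz.symm hvy.symm (fun h => (G.ne_of_adj hvx) h.symm) (h1.trans h2.symm)
  exact bichrom' G c hpath hcyc w y v x z β γ hyw.symm hvy.symm hvx hxz
    hxy.symm hwv hwx hzv.symm hzy.symm
    (by rw [Sym2.eq_swap]; exact hcw) (by rw [Sym2.eq_swap]; exact hcy)
    hcx hcz
end

section
/- Let G be a simple cubic graph with a star 4-edge-coloring, and let f(v) be the unique color missing at vertex v. Then f is a covering map from G to K_4: for every vertex v, the three neighbors of v receive, under f, exactly the three colors different from f(v). -/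
open SimpleGraph

section Aux

variable {V : Type*} {G : SimpleGraph V} {c : Sym2 V → Fin 4}

/-- Properness at a vertex. -/
lemma aux_prop_at
    (hprop : ∀ e₁ ∈ G.edgeSet, ∀ e₂ ∈ G.edgeSet, e₁ ≠ e₂ → (∃ v, v ∈ e₁ ∧ v ∈ e₂) → c e₁ ≠ c e₂)
    {v w1 w2 : V} (a1 : G.Adj v w1) (a2 : G.Adj v w2) (hne : w1 ≠ w2) :
    c s(v, w1) ≠ c s(v, w2) := by
  apply hprop _ a1 _ a2
  · intro h
    rw [Sym2.eq_iff] at h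
    rcases h with ⟨-, h⟩ | ⟨h1, h2⟩
    · exact hne h
    · exact hne (h2.trans h1)
  · exact ⟨v, by simp, by simp⟩

/-- Every color other than the missing one appears on an edge at `v`. -/
lemma aux_exists_nbr [Fintype V] [DecidableRel G.Adj]
    (hG : G.IsRegularOfDegree 3)
    (hprop : ∀ e₁ ∈ G.edgeSet, ∀ e₂ ∈ G.edgeSet, e₁ ≠ e₂ → (∃ v, v ∈ e₁ ∧ v ∈ e₂) → c e₁ ≠ c e₂)
    (f : V → Fin 4) (hf : ∀ v w, G.Adj v w → c s(v, w) ≠ f v)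
    (v : V) (p : Fin 4) (hp : p ≠ f v) : ∃ w, G.Adj v w ∧ c s(v, w) = p := by
  classical
  set S := G.neighborFinset v with hS
  have hcard : S.card = 3 := by
    rw [hS, card_neighborFinset_eq_degree]; exact hG v
  have hinj : Set.InjOn (fun w => c s(v, w)) ↑S := by
    intro w1 hw1 w2 hw2 heq
    by_contra hne
    exact aux_prop_at hprop (by simpa [hS] using hw1) (by simpa [hS] using hw2) hne heq
  have himg : (S.image fun w => c s(v, w)) ⊆ Finset.univ.erase (f v) := by
    intro x hx
    simp only [Finset.mem_image] at hx
    obtain ⟨w, hw, rfl⟩ := hx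
    exact Finset.mem_erase.2 ⟨hf v w (by simpa [hS] using hw), Finset.mem_univ _⟩
  have hcard2 : (S.image fun w => c s(v, w)).card = 3 := by
    rw [Finset.card_image_of_injOn hinj, hcard]
  have himg' : (S.image fun w => c s(v, w)) = Finset.univ.erase (f v) := by
    apply Finset.eq_of_subset_of_card_le himg
    rw [hcard2]
    simp [Finset.card_erase_of_mem]
  have hpmem : p ∈ S.image fun w => c s(v, w) := by
    rw [himg']; exact Finset.mem_erase.2 ⟨hp, Finset.mem_univ _⟩
  obtain ⟨w, hw, hcw⟩ := Finset.mem_image.1 hpmem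
  exact ⟨w, by simpa [hS] using hw, hcw⟩

/-- No path of 4 edges colored q,p,q,p can exist (it would be a bicolored
4-path or 4-cycle). -/
lemma aux_no_bicolored (hc : IsStarEdgeColoring G c)
    {a0 a1 a2 a3 a4 : V} {p q : Fin 4}
    (h01 : G.Adj a0 a1) (h12 : G.Adj a1 a2) (h23 : G.Adj a2 a3) (h34 : G.Adj a3 a4)
    (hpq : p ≠ q)
    (c01 : c s(a0, a1) = q) (c12 : c s(a1, a2) = p) (c23 : c s(a2, a3) = q)
    (c34 : c s(a3, a4) = p) : False := by
  obtain ⟨hprop, hpath, hcyc⟩ := hc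
  have n01 : a0 ≠ a1 := h01.ne
  have n12 : a1 ≠ a2 := h12.ne
  have n23 : a2 ≠ a3 := h23.ne
  have n34 : a3 ≠ a4 := h34.ne
  have n02 : a0 ≠ a2 := by
    rintro rfl
    exact hpq (by rw [← c12, ← c01, Sym2.eq_swap])
  have n13 : a1 ≠ a3 := by
    rintro rfl
    exact hpq (by rw [← c12, ← c23, Sym2.eq_swap])
  have n24 : a2 ≠ a4 := by
    rintro rfl
    exact hpq (by rw [← c34, ← c23, Sym2.eq_swap])
  have n03 : a0 ≠ a3 := by
    intro h
    refine hprop s(a0, a1) (G.mem_edgeSet.2 h01) s(a2, a3) (G.mem_edgeSet.2 h23) ?_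
      ⟨a0, by simp, by simp [h]⟩ (c01.trans c23.symm)
    intro hh
    rw [Sym2.eq_iff] at hh
    rcases hh with ⟨h1, -⟩ | ⟨-, h2⟩
    · exact n02 h1
    · exact n12 h2
  have n14 : a1 ≠ a4 := by
    intro h
    refine hprop s(a1, a2) (G.mem_edgeSet.2 h12) s(a3, a4) (G.mem_edgeSet.2 h34) ?_
      ⟨a1, by simp, by simp [h]⟩ (c12.trans c34.symm)
    intro hh
    rw [Sym2.eq_iff] at hh
    rcases hh with ⟨h1, -⟩ | ⟨-, h2⟩
    · exact n13 h1
    · exact n23 h2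
  by_cases h04 : a0 = a4
  · subst h04
    set w : G.Walk a0 a0 :=
      Walk.cons h01 (Walk.cons h12 (Walk.cons h23 (Walk.cons h34 Walk.nil))) with hw
    refine hcyc a0 w ?_ rfl ⟨p, q, ?_⟩
    · rw [Walk.isCycle_def]
      refine ⟨?_, by simp [hw], ?_⟩
      · rw [Walk.isTrail_def]
        simp only [hw, Walk.edges_cons, Walk.edges_nil]
        simp [List.nodup_cons, Sym2.eq_iff, n01, n12, n23, n34, n02, n13, n24, n03, n14,
          n01.symm, n12.symm, n23.symm, n34.symm, n02.symm, n13.symm, n24.symm, n03.symm,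
          n14.symm]
      · simp only [hw, Walk.support_cons, Walk.support_nil]
        simp [List.nodup_cons, n12, n13, n14, n23, n24, n34]
    · intro e he
      simp only [hw, Walk.edges_cons, Walk.edges_nil, List.mem_cons, List.not_mem_nil,
        or_false] at he
      rcases he with rfl | rfl | rfl | rfl
      · exact Or.inr c01
      · exact Or.inl c12
      · exact Or.inr c23
      · exact Or.inl c34
  · set w : G.Walk a0 a4 :=
      Walk.cons h01 (Walk.cons h12 (Walk.cons h23 (Walk.cons h34 Walk.nil))) with hw
    refine hpath a0 a4 w ?_ rfl ⟨p, q, ?_⟩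
    · rw [Walk.isPath_def]
      simp only [hw, Walk.support_cons, Walk.support_nil]
      simp [List.nodup_cons, n01, n02, n03, h04, n12, n13, n14, n23, n24, n34]
    · intro e he
      simp only [hw, Walk.edges_cons, Walk.edges_nil, List.mem_cons, List.not_mem_nil,
        or_false] at he
      rcases he with rfl | rfl | rfl | rfl
      · exact Or.inr c01
      · exact Or.inl c12
      · exact Or.inr c23
      · exact Or.inl c34

end Aux

/-- in a cubic graph with a star 4-edge-coloring, the missing-color
map is a covering map onto K₄: the three neighbors of each vertex v receive
exactly the three colors different from f v. -/
theorem missingColor_covering_K4 {V : Type*} [Fintype V]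
    (G : SimpleGraph V) [DecidableRel G.Adj] (hG : G.IsRegularOfDegree 3)
    (c : Sym2 V → Fin 4) (hc : IsStarEdgeColoring G c)
    (f : V → Fin 4) (hf : ∀ v w, G.Adj v w → c s(v, w) ≠ f v) :
    IsGraphCoveringMap G (⊤ : SimpleGraph (Fin 4)) f := by
  classical
  have hprop := hc.1
  have hf' : ∀ v w, G.Adj v w → c s(v, w) ≠ f w := by
    intro v w h
    rw [Sym2.eq_swap]
    exact hf w v h.symm
  -- Part 1: f is a graph homomorphism, i.e. adjacent vertices get distinct values.
  have hom : ∀ ⦃u v⦄, G.Adj u v → f u ≠ f v := by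
    intro u v huv heq
    set x := c s(u, v) with hx
    have hxfu : x ≠ f u := hf u v huv
    have hxfv : x ≠ f v := hf' u v huv
    -- pick the other two colors y z
    obtain ⟨y, z, hyz, hya, hyx, hza, hzx⟩ :
        ∃ y z : Fin 4, y ≠ z ∧ y ≠ f u ∧ y ≠ x ∧ z ≠ f u ∧ z ≠ x := by
      have : ∀ a x : Fin 4, ∃ y z : Fin 4, y ≠ z ∧ y ≠ a ∧ y ≠ x ∧ z ≠ a ∧ z ≠ x := by decide
      exact this (f u) x
    have hyb : y ≠ f v := heq ▸ hya
    have hzb : z ≠ f v := heq ▸ hza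
    obtain ⟨u1, hu1, cu1⟩ := aux_exists_nbr hG hprop f hf u y hya
    obtain ⟨u2, hu2, cu2⟩ := aux_exists_nbr hG hprop f hf u z hza
    obtain ⟨v1, hv1, cv1⟩ := aux_exists_nbr hG hprop f hf v y hyb
    obtain ⟨v2, hv2, cv2⟩ := aux_exists_nbr hG hprop f hf v z hzb
    have cvu : c s(v, u) = x := by rw [Sym2.eq_swap]
    by_cases h1 : f u1 = x
    · by_cases h2 : f u2 = x
      · -- both missing colors are x: bicolored path s1-u1-u-u2-t1 with colors z,y,z,y
        obtain ⟨s1, hs1, cs1⟩ := aux_exists_nbr hG hprop f hf u1 z (by rw [h1]; exact hzx)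
        obtain ⟨t1, ht1, ct1⟩ := aux_exists_nbr hG hprop f hf u2 y (by rw [h2]; exact hyx)
        exact aux_no_bicolored hc hs1.symm hu1.symm hu2 ht1 hyz
          (by rw [Sym2.eq_swap]; exact cs1) (by rw [Sym2.eq_swap]; exact cu1) cu2 ct1
      · -- u2 has an edge colored x: path v2-v-u-u2-w colored z,x,z,x
        obtain ⟨w, hw, cw⟩ := aux_exists_nbr hG hprop f hf u2 x (fun hh => h2 hh.symm)
        exact aux_no_bicolored hc hv2.symm huv.symm hu2 hw (Ne.symm hzx)
          (by rw [Sym2.eq_swap]; exact cv2) cvu cu2 cw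
    · -- u1 has an edge colored x: path v1-v-u-u1-w colored y,x,y,x
      obtain ⟨w, hw, cw⟩ := aux_exists_nbr hG hprop f hf u1 x (fun hh => h1 hh.symm)
      exact aux_no_bicolored hc hv1.symm huv.symm hu1 hw (Ne.symm hyx)
        (by rw [Sym2.eq_swap]; exact cv1) cvu cu1 cw
  -- Part 2: f is injective on each neighborhood.
  have inj : ∀ v, Set.InjOn f (G.neighborSet v) := by
    intro v u1 hu1 u2 hu2 heq
    by_contra hne
    have a1 : G.Adj v u1 := hu1
    have a2 : G.Adj v u2 := hu2
    have hpq : c s(v, u1) ≠ c s(v, u2) := aux_prop_at hprop a1 a2 hne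
    have hq : c s(v, u2) ≠ f u1 := by rw [heq]; exact hf' v u2 a2
    have hp : c s(v, u1) ≠ f u2 := by rw [← heq]; exact hf' v u1 a1
    obtain ⟨s1, hs1, cs1⟩ := aux_exists_nbr hG hprop f hf u1 (c s(v, u2)) hq
    obtain ⟨t1, ht1, ct1⟩ := aux_exists_nbr hG hprop f hf u2 (c s(v, u1)) hp
    exact aux_no_bicolored hc hs1.symm a1.symm a2 ht1 hpq
      (by rw [Sym2.eq_swap]; exact cs1) (by rw [Sym2.eq_swap]) rfl ct1
  refine ⟨fun u v h => by rw [top_adj]; exact hom h, fun v => ⟨?_, inj v, ?_⟩⟩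
  · intro w hw
    rw [mem_neighborSet, top_adj]
    exact hom hw
  · intro b hb
    rw [mem_neighborSet, top_adj] at hb
    have hcard : (G.neighborFinset v).card = 3 := by
      rw [card_neighborFinset_eq_degree]; exact hG v
    have hinj : Set.InjOn f ↑(G.neighborFinset v) := by
      intro w1 hw1 w2 hw2 h
      exact inj v (by simpa using hw1) (by simpa using hw2) h
    have himg : ((G.neighborFinset v).image f) ⊆ Finset.univ.erase (f v) := by
      intro x hx
      obtain ⟨w, hw, rfl⟩ := Finset.mem_image.1 hx
      exact Finset.mem_erase.2 ⟨Ne.symm (hom (by simpa using hw)), Finset.mem_univ _⟩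
    have himg' : ((G.neighborFinset v).image f) = Finset.univ.erase (f v) := by
      apply Finset.eq_of_subset_of_card_le himg
      rw [Finset.card_image_of_injOn hinj, hcard]
      simp [Finset.card_erase_of_mem]
    have hbmem : b ∈ (G.neighborFinset v).image f := by
      rw [himg']; exact Finset.mem_erase.2 ⟨Ne.symm hb, Finset.mem_univ _⟩
    obtain ⟨w, hw, hfw⟩ := Finset.mem_image.1 hbmem
    exact ⟨w, by simpa using hw, hfw⟩
end

section
/- The cycle C_k on k vertices admits a star edge-coloring with 3 colors if and only if k = 3, k = 4, or k ≥ 6 (equivalently, if and only if k ≠ 5). The 5-cycle C_5 requires 4 colors, so χ'_s(C_5) = 4. -/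
open SimpleGraph

/-!
A star edge-coloring of `C_k` can be read off a cyclic word `f` over the colors, the edge
`{i, i+1}` getting the letter `f i`. A trail with four edges in `C_k` runs through four
consecutive edges, so the coloring is a star coloring as soon as adjacent letters differ and no
window `f i, f (i+1), f (i+2), f (i+3)` has the form `abab`; for `k ≥ 5` four consecutive edges
form a path, so the condition is also necessary. Over three letters `(0121)^r (012)^q`, with
`r = k % 3`, is such a word of length `k = 4r + 3q`; it exists unless `k = 5`. For `k = 5` no
three-letter word qualifies, while `01023` is a four-letter one.
-/

namespace Fin

variable {n : ℕ}

lemma val_add_one_eq_or (i : Fin (n + 1)) :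
    (i.val < n ∧ (i + 1).val = i.val + 1) ∨ (i.val = n ∧ (i + 1).val = 0) := by
  rw [val_add_one]
  split_ifs with h
  · exact Or.inr ⟨by simp [h], rfl⟩
  · exact Or.inl ⟨val_lt_last h, rfl⟩

open Fin.CommRing in
lemma add_one_add_one (i : Fin (n + 3)) : i + 1 + 1 = i + 2 := by ring

open Fin.CommRing in
lemma add_two_add_one (i : Fin (n + 3)) : i + 2 + 1 = i + 3 := by ring

open Fin.CommRing in
lemma add_three_add_one (i : Fin (n + 3)) : i + 3 + 1 = i + 4 := by ring

lemma add_one_add_one_ne_self (i : Fin (n + 3)) : i + 1 + 1 ≠ i := by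
  have h₁ := val_add_one_eq_or i
  have h₂ := val_add_one_eq_or (i + 1)
  rw [Ne, Fin.ext_iff]
  generalize (i + 1 + 1).val = x₂ at *
  generalize (i + 1).val = x₁ at *
  have hi := i.isLt
  omega

lemma nodup_add_one_iterate (i : Fin (n + 5)) :
    [i, i + 1, i + 1 + 1, i + 1 + 1 + 1, i + 1 + 1 + 1 + 1].Nodup := by
  have h₁ := val_add_one_eq_or i
  have h₂ := val_add_one_eq_or (i + 1)
  have h₃ := val_add_one_eq_or (i + 1 + 1)
  have h₄ := val_add_one_eq_or (i + 1 + 1 + 1)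
  simp only [List.nodup_cons, List.mem_cons, List.not_mem_nil, List.nodup_nil, or_false,
    not_or, not_false_eq_true, and_true, Fin.ext_iff]
  generalize (i + 1 + 1 + 1 + 1).val = x₄ at *
  generalize (i + 1 + 1 + 1).val = x₃ at *
  generalize (i + 1 + 1).val = x₂ at *
  generalize (i + 1).val = x₁ at *
  have hi := i.isLt
  omega

end Fin

lemma eq_of_ne_of_ne_of_eq_or_eq {α : Type*} {a b x y z : α} (hx : x = a ∨ x = b)
    (hy : y = a ∨ y = b) (hz : z = a ∨ z = b) (hxy : x ≠ y) (hyz : y ≠ z) : x = z := by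
  rcases hx with rfl | rfl <;> rcases hy with rfl | rfl <;> rcases hz with rfl | rfl <;>
    simp_all

namespace SimpleGraph

variable {V : Type*} {G : SimpleGraph V}

lemma Walk.IsTrail.ne_of_cons_cons {u v w x : V} {h : G.Adj u v} {h' : G.Adj v w}
    {p : G.Walk w x} (hp : (cons h (cons h' p)).IsTrail) : u ≠ w := by
  rintro rfl
  simp [Walk.isTrail_def, Sym2.eq_swap] at hp

variable {n : ℕ} {α : Type*}

lemma cycleGraph_adj_iff_eq_add_one {u v : Fin (n + 2)} :
    (cycleGraph (n + 2)).Adj u v ↔ v = u + 1 ∨ u = v + 1 := by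
  rw [cycleGraph_adj, sub_eq_iff_eq_add', sub_eq_iff_eq_add', or_comm]

lemma cycleGraph_adj_add_one (i : Fin (n + 2)) : (cycleGraph (n + 2)).Adj i (i + 1) :=
  cycleGraph_adj_iff_eq_add_one.2 (Or.inl rfl)

lemma cycleGraph_mem_edgeSet_iff {e : Sym2 (Fin (n + 2))} :
    e ∈ (cycleGraph (n + 2)).edgeSet ↔ ∃ i, e = s(i, i + 1) := by
  induction e with
  | _ u v =>
    rw [mem_edgeSet, cycleGraph_adj_iff_eq_add_one]
    constructor
    · rintro (rfl | rfl)
      exacts [⟨u, rfl⟩, ⟨v, Sym2.eq_swap⟩]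
    · rintro ⟨i, h⟩
      rcases Sym2.eq_iff.1 h with ⟨rfl, rfl⟩ | ⟨rfl, rfl⟩
      exacts [Or.inl rfl, Or.inr rfl]

lemma cycleGraph_adj_adj_of_ne {a b c : Fin (n + 2)} (hab : (cycleGraph (n + 2)).Adj a b)
    (hbc : (cycleGraph (n + 2)).Adj b c) (hac : a ≠ c) :
    (b = a + 1 ∧ c = b + 1) ∨ (a = b + 1 ∧ b = c + 1) := by
  rw [cycleGraph_adj_iff_eq_add_one] at hab hbc
  rcases hab with hab | hab <;> rcases hbc with hbc | hbc
  · exact Or.inl ⟨hab, hbc⟩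
  · exact absurd (add_right_cancel (hab ▸ hbc)) hac
  · exact absurd (hab.trans hbc.symm) hac
  · exact Or.inr ⟨hab, hbc⟩

def cycleGraph.consecutiveEdges (i : Fin (n + 3)) : List (Sym2 (Fin (n + 3))) :=
  [s(i, i + 1), s(i + 1, i + 2), s(i + 2, i + 3), s(i + 3, i + 4)]

lemma Walk.IsTrail.cycleGraph_edges_eq {u v : Fin (n + 3)} {p : (cycleGraph (n + 3)).Walk u v}
    (hp : p.IsTrail) (hlen : p.length = 4) : ∃ i, p.edges = cycleGraph.consecutiveEdges i ∨
      p.edges.reverse = cycleGraph.consecutiveEdges i := by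
  rcases p with _ | ⟨h₀₁, _ | ⟨h₁₂, _ | ⟨h₂₃, _ | ⟨h₃₄, _ | ⟨_, _⟩⟩⟩⟩⟩ <;>
    simp only [Walk.length_cons, Walk.length_nil] at hlen <;>
    try omega
  have d₀₂ := hp.ne_of_cons_cons
  have d₁₃ := hp.of_cons.ne_of_cons_cons
  have d₂₄ := hp.of_cons.of_cons.ne_of_cons_cons
  rcases cycleGraph_adj_adj_of_ne h₀₁ h₁₂ d₀₂ with ⟨rfl, rfl⟩ | ⟨rfl, rfl⟩
  · obtain ⟨-, rfl⟩ := (cycleGraph_adj_adj_of_ne h₁₂ h₂₃ d₁₃).resolve_right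
      fun h => Fin.add_one_add_one_ne_self _ h.1.symm
    obtain ⟨-, rfl⟩ := (cycleGraph_adj_adj_of_ne h₂₃ h₃₄ d₂₄).resolve_right
      fun h => Fin.add_one_add_one_ne_self _ h.1.symm
    refine ⟨u, Or.inl ?_⟩
    simp [cycleGraph.consecutiveEdges, Fin.add_one_add_one, Fin.add_two_add_one,
      Fin.add_three_add_one]
  · obtain ⟨-, rfl⟩ := (cycleGraph_adj_adj_of_ne h₁₂ h₂₃ d₁₃).resolve_left
      fun h => Fin.add_one_add_one_ne_self _ h.1.symm
    obtain ⟨-, rfl⟩ := (cycleGraph_adj_adj_of_ne h₂₃ h₃₄ d₂₄).resolve_left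
      fun h => Fin.add_one_add_one_ne_self _ h.1.symm
    refine ⟨v, Or.inr ?_⟩
    simp [cycleGraph.consecutiveEdges, Fin.add_one_add_one, Fin.add_two_add_one,
      Fin.add_three_add_one, Sym2.eq_swap]

def cycleGraph.edgeColoringOfWord (f : Fin (n + 3) → α) : Sym2 (Fin (n + 3)) → α :=
  Sym2.lift ⟨fun i j => if j = i + 1 then f i else if i = j + 1 then f j else f 0, by
    intro i j
    by_cases h : j = i + 1
    · subst h
      simp [(Fin.add_one_add_one_ne_self i).symm]
    · simp [h]⟩

@[simp]
lemma cycleGraph.edgeColoringOfWord_mk (f : Fin (n + 3) → α) (i : Fin (n + 3)) :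
    edgeColoringOfWord f s(i, i + 1) = f i := by
  simp [edgeColoringOfWord]

lemma cycleGraph.map_edgeColoringOfWord_consecutiveEdges (f : Fin (n + 3) → α)
    (i : Fin (n + 3)) :
    (consecutiveEdges i).map (edgeColoringOfWord f) = [f i, f (i + 1), f (i + 2), f (i + 3)] := by
  simp [consecutiveEdges, ← Fin.add_one_add_one, ← Fin.add_two_add_one,
    ← Fin.add_three_add_one]

end SimpleGraph

def IsStarWord {n : ℕ} {α : Type*} (f : Fin (n + 3) → α) : Prop :=
  ∀ i, f i ≠ f (i + 1) ∧ ¬(f i = f (i + 2) ∧ f (i + 1) = f (i + 3))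

namespace IsStarWord

variable {n : ℕ} {α : Type*} {f : Fin (n + 3) → α}

lemma map {β : Type*} (hf : IsStarWord f) {φ : α → β} (hφ : Function.Injective φ) :
    IsStarWord (φ ∘ f) :=
  fun i => ⟨hφ.ne (hf i).1, fun h => (hf i).2 ⟨hφ h.1, hφ h.2⟩⟩

lemma not_forall_eq_or_eq (hf : IsStarWord f) (i : Fin (n + 3)) (a b : α) :
    ¬ ∀ x ∈ [f i, f (i + 1), f (i + 2), f (i + 3)], x = a ∨ x = b := by
  intro H
  simp only [List.mem_cons, List.not_mem_nil, or_false, forall_eq_or_imp, forall_eq] at H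
  obtain ⟨h₀, h₁, h₂, h₃⟩ := H
  have h₁₂ := (hf (i + 1)).1
  have h₂₃ := (hf (i + 2)).1
  rw [Fin.add_one_add_one] at h₁₂
  rw [Fin.add_two_add_one] at h₂₃
  exact (hf i).2 ⟨eq_of_ne_of_ne_of_eq_or_eq h₀ h₁ h₂ (hf i).1 h₁₂,
    eq_of_ne_of_ne_of_eq_or_eq h₁ h₂ h₃ h₁₂ h₂₃⟩

theorem isStarEdgeColoring (hf : IsStarWord f) :
    IsStarEdgeColoring (cycleGraph (n + 3)) (cycleGraph.edgeColoringOfWord f) := by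
  have no_bicolored_trail : ∀ {u v} (p : (cycleGraph (n + 3)).Walk u v), p.IsTrail →
      p.length = 4 → ¬ ∃ a b, ∀ e ∈ p.edges, cycleGraph.edgeColoringOfWord f e = a ∨
        cycleGraph.edgeColoringOfWord f e = b := by
    rintro u v p hp hlen ⟨a, b, H⟩
    obtain ⟨i, hi⟩ := hp.cycleGraph_edges_eq hlen
    refine hf.not_forall_eq_or_eq i a b ?_
    rw [← cycleGraph.map_edgeColoringOfWord_consecutiveEdges, List.forall_mem_map]
    rcases hi with hi | hi <;> simpa [← hi] using H
  refine ⟨?_, fun u v p hp => no_bicolored_trail p hp.isTrail,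
    fun u p hp => no_bicolored_trail p hp.isTrail⟩
  intro e₁ he₁ e₂ he₂ hne ⟨w, hw₁, hw₂⟩
  obtain ⟨i, rfl⟩ := cycleGraph_mem_edgeSet_iff.1 he₁
  obtain ⟨j, rfl⟩ := cycleGraph_mem_edgeSet_iff.1 he₂
  rw [cycleGraph.edgeColoringOfWord_mk, cycleGraph.edgeColoringOfWord_mk]
  rw [Sym2.mem_iff] at hw₁ hw₂
  rcases hw₁ with h₁ | h₁ <;> rcases hw₂ with h₂ | h₂
  · exact absurd (by rw [← h₁, ← h₂]) hne
  · rw [← h₁, h₂]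
    exact (hf j).1.symm
  · rw [← h₂, h₁]
    exact (hf i).1
  · exact absurd (by rw [add_right_cancel (h₁.symm.trans h₂)]) hne

end IsStarWord

theorem IsStarEdgeColoring.isStarWord_cycleGraph {n : ℕ} {α : Type*}
    {c : Sym2 (Fin (n + 5)) → α} (hc : IsStarEdgeColoring (cycleGraph (n + 5)) c) :
    IsStarWord (fun i => c s(i, i + 1)) := by
  intro i
  have adj := cycleGraph_adj_add_one (n := n + 3)
  have hne : s(i, i + 1) ≠ s(i + 1, i + 1 + 1) := by
    intro h
    rcases Sym2.eq_iff.1 h with ⟨h, -⟩ | ⟨h, -⟩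
    exacts [(adj i).ne h, (Fin.add_one_add_one_ne_self i).symm h]
  refine ⟨hc.1 _ (adj i) _ (adj (i + 1)) hne ⟨i + 1, by simp, by simp⟩, ?_⟩
  rintro ⟨h₀₂, h₁₃⟩
  let p := Walk.cons (adj i) <| .cons (adj (i + 1)) <| .cons (adj (i + 1 + 1)) <|
    .cons (adj (i + 1 + 1 + 1)) .nil
  have hp : p.IsPath := Walk.IsPath.mk' (by simpa [p] using Fin.nodup_add_one_iterate i)
  refine hc.2.1 _ _ p hp rfl ⟨c s(i, i + 1), c s(i + 1, i + 2), ?_⟩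
  simp only [Fin.add_one_add_one, Fin.add_two_add_one, Fin.add_three_add_one] at h₀₂ h₁₃
  simp [p, Fin.add_one_add_one, Fin.add_two_add_one, Fin.add_three_add_one, h₀₂, h₁₃]

/- A proper coloring of the odd cycle `C_5` uses each color at most twice, so with three colors
some color occurs once and the other four consecutive letters form `abab`. -/
set_option maxRecDepth 100000 in
lemma not_isStarWord_fin_five (g : Fin 5 → Fin 3) : ¬ IsStarWord g := by
  revert g
  unfold IsStarWord
  decide

lemma isStarWord_fin_five_four : IsStarWord (![0, 1, 0, 2, 3] : Fin 5 → Fin 4) := by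
  unfold IsStarWord
  decide

lemma not_exists_isStarEdgeColoring_cycleGraph_five {m : ℕ} (hm : m ≤ 3) :
    ¬ ∃ c : Sym2 (Fin 5) → Fin m, IsStarEdgeColoring (cycleGraph 5) c := by
  rintro ⟨c, hc⟩
  exact not_isStarWord_fin_five _ (hc.isStarWord_cycleGraph.map (Fin.castLE_injective hm))

/-- Letter `x` of the word `(0121)^r (012)^q` of length `k = 4r + 3q`, where `r = k % 3`. -/
def threeLetterWord (k x : ℕ) : ℕ :=
  if x < 4 * (k % 3) then (if x % 4 = 3 then 1 else x % 4) else (x - 4 * (k % 3)) % 3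

lemma threeLetterWord_eq_or (k x : ℕ) :
    (x < 4 * (k % 3) ∧ x % 4 ≠ 3 ∧ threeLetterWord k x = x % 4) ∨
    (x < 4 * (k % 3) ∧ x % 4 = 3 ∧ threeLetterWord k x = 1) ∨
    (4 * (k % 3) ≤ x ∧ threeLetterWord k x = (x - 4 * (k % 3)) % 3) := by
  unfold threeLetterWord
  split_ifs <;> omega

lemma threeLetterWord_lt_three (k x : ℕ) : threeLetterWord k x < 3 := by
  have := threeLetterWord_eq_or k x
  omega

lemma isStarWord_threeLetterWord {n : ℕ} (hn : n + 3 ≠ 5) :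
    IsStarWord fun i : Fin (n + 3) =>
      (⟨threeLetterWord (n + 3) i, threeLetterWord_lt_three _ _⟩ : Fin 3) := by
  intro i
  rw [← Fin.add_two_add_one, ← Fin.add_one_add_one]
  simp only [ne_eq, Fin.mk.injEq]
  have w₀ := threeLetterWord_eq_or (n + 3) i.val
  have w₁ := threeLetterWord_eq_or (n + 3) (i + 1).val
  have w₂ := threeLetterWord_eq_or (n + 3) (i + 1 + 1).val
  have w₃ := threeLetterWord_eq_or (n + 3) (i + 1 + 1 + 1).val
  have h₁ := Fin.val_add_one_eq_or i
  have h₂ := Fin.val_add_one_eq_or (i + 1)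
  have h₃ := Fin.val_add_one_eq_or (i + 1 + 1)
  generalize (i + 1 + 1 + 1).val = x₃ at *
  generalize (i + 1 + 1).val = x₂ at *
  generalize (i + 1).val = x₁ at *
  have hi := i.isLt
  omega

/-- the cycle C_k admits a star 3-edge-coloring iff k ≠ 5
(for k ≥ 3), and χ'_s(C₅) = 4. -/
theorem cycle_star_three_coloring_iff :
    (∀ k : ℕ, 3 ≤ k →
      ((∃ c : Sym2 (Fin k) → Fin 3, IsStarEdgeColoring (SimpleGraph.cycleGraph k) c) ↔
        k ≠ 5)) ∧
    starChromaticIndex (SimpleGraph.cycleGraph 5) = 4 := by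
  refine ⟨fun k hk => ⟨?_, fun hk5 => ?_⟩, ?_⟩
  · rintro hc rfl
    exact not_exists_isStarEdgeColoring_cycleGraph_five le_rfl hc
  · obtain ⟨n, rfl⟩ := Nat.exists_eq_add_of_le' hk
    exact ⟨_, (isStarWord_threeLetterWord hk5).isStarEdgeColoring⟩
  · have h₄ : 4 ∈ {k | ∃ c : Sym2 (Fin 5) → Fin k, IsStarEdgeColoring (cycleGraph 5) c} :=
      ⟨_, isStarWord_fin_five_four.isStarEdgeColoring⟩
    refine le_antisymm (Nat.sInf_le h₄) (le_csInf ⟨4, h₄⟩ fun m hm => ?_)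
    by_contra! hm4
    exact not_exists_isStarEdgeColoring_cycleGraph_five (by omega) hm
end

section
/- In any star edge-coloring of K_{3,3}, if some color class F contains two disjoint edges ab and cd (with a, c in one part and b, d in the other), then at least one of the edges ad or cb forms a singleton color class. -/
open SimpleGraph

private abbrev G33 := completeBipartiteGraph (Fin 3) (Fin 3)

private lemma K33_no_bi_path {α : Type*} (col : Sym2 (Fin 3 ⊕ Fin 3) → α)
    (hcol : IsStarEdgeColoring G33 col)
    {v0 v1 v2 v3 v4 : Fin 3 ⊕ Fin 3}
    (h01 : G33.Adj v0 v1) (h12 : G33.Adj v1 v2) (h23 : G33.Adj v2 v3) (h34 : G33.Adj v3 v4)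
    (hnd : List.Nodup [v0, v1, v2, v3, v4]) (A B : α)
    (hc0 : col s(v0,v1) = A ∨ col s(v0,v1) = B)
    (hc1 : col s(v1,v2) = A ∨ col s(v1,v2) = B)
    (hc2 : col s(v2,v3) = A ∨ col s(v2,v3) = B)
    (hc3 : col s(v3,v4) = A ∨ col s(v3,v4) = B) : False := by
  refine hcol.2.1 v0 v4
    (Walk.cons h01 (Walk.cons h12 (Walk.cons h23 (Walk.cons h34 Walk.nil)))) ?_ rfl
    ⟨A, B, ?_⟩
  · rw [Walk.isPath_def]; simpa using hnd
  · intro e he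
    simp only [Walk.edges_cons, Walk.edges_nil, List.mem_cons, List.not_mem_nil, or_false] at he
    rcases he with rfl | rfl | rfl | rfl <;> assumption

private lemma K33_no_bi_cycle {α : Type*} (col : Sym2 (Fin 3 ⊕ Fin 3) → α)
    (hcol : IsStarEdgeColoring G33 col)
    {v0 v1 v2 v3 : Fin 3 ⊕ Fin 3}
    (h01 : G33.Adj v0 v1) (h12 : G33.Adj v1 v2) (h23 : G33.Adj v2 v3) (h30 : G33.Adj v3 v0)
    (hnd : List.Nodup [v0, v1, v2, v3]) (A B : α)
    (hc0 : col s(v0,v1) = A ∨ col s(v0,v1) = B)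
    (hc1 : col s(v1,v2) = A ∨ col s(v1,v2) = B)
    (hc2 : col s(v2,v3) = A ∨ col s(v2,v3) = B)
    (hc3 : col s(v3,v0) = A ∨ col s(v3,v0) = B) : False := by
  simp only [List.nodup_cons, List.mem_cons, List.not_mem_nil, or_false, List.nodup_nil,
    and_true, not_or] at hnd
  refine hcol.2.2 v0
    (Walk.cons h01 (Walk.cons h12 (Walk.cons h23 (Walk.cons h30 Walk.nil)))) ?_ rfl
    ⟨A, B, ?_⟩
  case refine_2 =>
    intro e he
    simp only [Walk.edges_cons, Walk.edges_nil, List.mem_cons, List.not_mem_nil, or_false] at he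
    rcases he with rfl | rfl | rfl | rfl <;> assumption
  · rw [Walk.isCycle_def]
    refine ⟨?_, by simp, ?_⟩
    · constructor
      simp only [Walk.edges_cons, Walk.edges_nil, List.nodup_cons, List.mem_cons,
        List.not_mem_nil, or_false, List.nodup_nil, and_true, not_or, Sym2.eq_iff]
      obtain ⟨⟨h1, h2, h3⟩, ⟨h4, h5⟩, h6, -⟩ := hnd
      tauto
    · simp only [Walk.support_cons, Walk.support_nil, List.tail_cons, List.nodup_cons,
        List.mem_cons, List.not_mem_nil, or_false, List.nodup_nil, and_true, not_or]
      obtain ⟨⟨h1, h2, h3⟩, ⟨h4, h5⟩, h6, -⟩ := hnd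
      exact ⟨⟨h4, h5, fun h => h1 h.symm⟩, ⟨h6, fun h => h2 h.symm⟩, fun h => h3 h.symm, not_false⟩

private lemma K33_edge_form (e : Sym2 (Fin 3 ⊕ Fin 3)) (he : e ∈ G33.edgeSet) :
    ∃ x y : Fin 3, e = s(Sum.inl x, Sum.inr y) := by
  induction e using Sym2.ind with
  | _ u v =>
    rw [mem_edgeSet] at he
    rcases u with x | x <;> rcases v with y | y
    · rcases he with ⟨-, h⟩ | ⟨h, -⟩ <;> simp at h
    · exact ⟨x, y, rfl⟩
    · exact ⟨y, x, Sym2.eq_swap⟩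
    · rcases he with ⟨h, -⟩ | ⟨-, h⟩ <;> simp at h

private lemma fin3_third (a c x x' : Fin 3) (hac : a ≠ c)
    (h1 : x ≠ a) (h2 : x ≠ c) (h3 : x' ≠ a) (h4 : x' ≠ c) : x = x' := by
  revert hac h1 h2 h3 h4; revert a c x x'; decide

/-- in a star edge-coloring of K_{3,3}, if a color class contains
two disjoint edges ab, cd, then ad or cb forms a singleton color class. -/
theorem K33_disjoint_class_forces_singleton {α : Type*}
    (col : Sym2 (Fin 3 ⊕ Fin 3) → α)
    (hcol : IsStarEdgeColoring (completeBipartiteGraph (Fin 3) (Fin 3)) col)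
    (a c : Fin 3) (b d : Fin 3) (hac : a ≠ c) (hbd : b ≠ d)
    (hsame : col s(Sum.inl a, Sum.inr b) = col s(Sum.inl c, Sum.inr d)) :
    (∀ e ∈ (completeBipartiteGraph (Fin 3) (Fin 3)).edgeSet,
        col e = col s(Sum.inl a, Sum.inr d) → e = s(Sum.inl a, Sum.inr d)) ∨
    (∀ e ∈ (completeBipartiteGraph (Fin 3) (Fin 3)).edgeSet,
        col e = col s(Sum.inl c, Sum.inr b) → e = s(Sum.inl c, Sum.inr b)) := by
  by_contra hcon
  push_neg at hcon
  obtain ⟨⟨e1, he1G, he1c, he1ne⟩, ⟨e2, he2G, he2c, he2ne⟩⟩ := hcon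
  have hmem : ∀ x y : Fin 3, s(Sum.inl x, Sum.inr y) ∈ G33.edgeSet :=
    fun _ _ => Or.inl ⟨rfl, rfl⟩
  -- properness: equally colored distinct edges share no endpoint
  have hdisj : ∀ x y u v : Fin 3, s(Sum.inl x, Sum.inr y) ≠ s(Sum.inl u, Sum.inr v) →
      col s(Sum.inl x, Sum.inr y) = col s(Sum.inl u, Sum.inr v) → x ≠ u ∧ y ≠ v := by
    intro x y u v hne hceq
    constructor
    · rintro rfl
      exact hcol.1 _ (hmem x y) _ (hmem x v) hne ⟨Sum.inl x, by simp, by simp⟩ hceq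
    · rintro rfl
      exact hcol.1 _ (hmem x y) _ (hmem u y) hne ⟨Sum.inr y, by simp, by simp⟩ hceq
  -- if col(ad) = col(cb) we get a bicolored 4-cycle a b c d
  have hADCB : col s(Sum.inl a, Sum.inr d) = col s(Sum.inl c, Sum.inr b) → False := by
    intro h
    refine K33_no_bi_cycle col hcol (v0 := Sum.inl a) (v1 := Sum.inr b) (v2 := Sum.inl c)
      (v3 := Sum.inr d) (Or.inl ⟨rfl, rfl⟩) (Or.inr ⟨rfl, rfl⟩) (Or.inl ⟨rfl, rfl⟩)
      (Or.inr ⟨rfl, rfl⟩) (by simp [hac, hbd]) (col s(Sum.inl a, Sum.inr b))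
      (col s(Sum.inl a, Sum.inr d)) (Or.inl rfl) ?_ (Or.inl hsame.symm) ?_
    · exact Or.inr (by rw [Sym2.eq_swap]; exact h.symm)
    · exact Or.inr (by rw [Sym2.eq_swap])
  obtain ⟨x, y, rfl⟩ := K33_edge_form e1 he1G
  obtain ⟨x', y', rfl⟩ := K33_edge_form e2 he2G
  obtain ⟨hxa, hyd⟩ := hdisj x y a d he1ne he1c
  obtain ⟨hx'c, hy'b⟩ := hdisj x' y' c b he2ne he2c
  have h1 : (x ≠ a ∧ x ≠ c) ∧ (y ≠ b ∧ y ≠ d) := by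
    by_cases hxc : x = c
    · subst x
      by_cases hyb : y = b
      · subst y; exact absurd he1c.symm hADCB
      · -- path  y -- c -- d -- a -- b
        exact absurd (K33_no_bi_path col hcol (v0 := Sum.inr y) (v1 := Sum.inl c)
          (v2 := Sum.inr d) (v3 := Sum.inl a) (v4 := Sum.inr b)
          (Or.inr ⟨rfl, rfl⟩) (Or.inl ⟨rfl, rfl⟩) (Or.inr ⟨rfl, rfl⟩) (Or.inl ⟨rfl, rfl⟩)
          (by simp [hyd, hyb, Ne.symm hac, Ne.symm hbd])
          (col s(Sum.inl a, Sum.inr b)) (col s(Sum.inl a, Sum.inr d))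
          (Or.inr (by rw [Sym2.eq_swap]; exact he1c))
          (Or.inl hsame.symm)
          (Or.inr (by rw [Sym2.eq_swap]))
          (Or.inl rfl)) not_false
    · by_cases hyb : y = b
      · subst y
        -- path  x -- b -- a -- d -- c
        exact absurd (K33_no_bi_path col hcol (v0 := Sum.inl x) (v1 := Sum.inr b)
          (v2 := Sum.inl a) (v3 := Sum.inr d) (v4 := Sum.inl c)
          (Or.inl ⟨rfl, rfl⟩) (Or.inr ⟨rfl, rfl⟩) (Or.inl ⟨rfl, rfl⟩) (Or.inr ⟨rfl, rfl⟩)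
          (by simp [hxa, hxc, hac, hbd])
          (col s(Sum.inl a, Sum.inr b)) (col s(Sum.inl a, Sum.inr d))
          (Or.inr he1c)
          (Or.inl (by rw [Sym2.eq_swap]))
          (Or.inr rfl)
          (Or.inl (by rw [Sym2.eq_swap]; exact hsame.symm))) not_false
      · exact ⟨⟨hxa, hxc⟩, hyb, hyd⟩
  have h2 : (x' ≠ a ∧ x' ≠ c) ∧ (y' ≠ b ∧ y' ≠ d) := by
    by_cases hx'a : x' = a
    · subst x'
      by_cases hy'd : y' = d
      · subst y'; exact absurd he2c hADCB
      · -- path  y' -- a -- b -- c -- d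
        exact absurd (K33_no_bi_path col hcol (v0 := Sum.inr y') (v1 := Sum.inl a)
          (v2 := Sum.inr b) (v3 := Sum.inl c) (v4 := Sum.inr d)
          (Or.inr ⟨rfl, rfl⟩) (Or.inl ⟨rfl, rfl⟩) (Or.inr ⟨rfl, rfl⟩) (Or.inl ⟨rfl, rfl⟩)
          (by simp [hy'b, hy'd, hac, hbd])
          (col s(Sum.inl a, Sum.inr b)) (col s(Sum.inl c, Sum.inr b))
          (Or.inr (by rw [Sym2.eq_swap]; exact he2c))
          (Or.inl rfl)
          (Or.inr (by rw [Sym2.eq_swap]))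
          (Or.inl hsame.symm)) not_false
    · by_cases hy'd : y' = d
      · subst y'
        -- path  x' -- d -- c -- b -- a
        exact absurd (K33_no_bi_path col hcol (v0 := Sum.inl x') (v1 := Sum.inr d)
          (v2 := Sum.inl c) (v3 := Sum.inr b) (v4 := Sum.inl a)
          (Or.inl ⟨rfl, rfl⟩) (Or.inr ⟨rfl, rfl⟩) (Or.inl ⟨rfl, rfl⟩) (Or.inr ⟨rfl, rfl⟩)
          (by simp [hx'a, hx'c, Ne.symm hac, Ne.symm hbd])
          (col s(Sum.inl a, Sum.inr b)) (col s(Sum.inl c, Sum.inr b))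
          (Or.inr he2c)
          (Or.inl (by rw [Sym2.eq_swap]; exact hsame.symm))
          (Or.inr rfl)
          (Or.inl (by rw [Sym2.eq_swap]))) not_false
      · exact ⟨⟨hx'a, hx'c⟩, hy'b, hy'd⟩
  obtain ⟨⟨hxa', hxc'⟩, hyb', hyd'⟩ := h1
  obtain ⟨⟨hx'a', hx'c'⟩, hy'b', hy'd'⟩ := h2
  have hx : x = x' := fin3_third a c x x' hac hxa' hxc' hx'a' hx'c'
  have hy : y = y' := fin3_third b d y y' hbd hyb' hyd' hy'b' hy'd'
  subst hx; subst hy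
  exact hADCB (he1c.symm.trans he2c)
end

section
/- Let G be a graph of maximum degree Δ, let f: V(G) → {1,...,Δ+1} be a proper vertex coloring, and suppose c is a star edge-coloring of the complete graph on vertex set {1,...,Δ+1} using k colors. Suppose moreover g is an edge-coloring of G with m colors such that for any pair of f-color classes i, j, the coloring g properly colors the square of the line graph of the induced subgraph G[V_i ∪ V_j] (no two edges of G[V_i ∪ V_j] at line-graph distance ≤ 2 share a g-color). Then h(uv) = (c(f(u)f(v)), g(uv)) is a star edge-coloring of G, and hence χ'_s(G) ≤ k·m. -/
open SimpleGraph

section Aux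

variable {V α β : Type*}

lemma pullback_two_colors {ι : Type*} (φ : α → β) (hφ : Function.Injective φ)
    (F : ι → α) (l : List ι) (hl : l ≠ []) (a b : β)
    (hab : ∀ e ∈ l, φ (F e) = a ∨ φ (F e) = b) :
    ∃ a' b' : α, ∀ e ∈ l, F e = a' ∨ F e = b' := by
  obtain ⟨e0, he0⟩ := List.exists_mem_of_ne_nil l hl
  rcases hab e0 he0 with h0 | h0
  · by_cases hb : ∃ e ∈ l, φ (F e) = b
    · obtain ⟨e1, he1, hbe⟩ := hb
      exact ⟨F e0, F e1, fun e he =>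
        (hab e he).imp (fun h => hφ (h.trans h0.symm)) (fun h => hφ (h.trans hbe.symm))⟩
    · push_neg at hb
      exact ⟨F e0, F e0, fun e he =>
        Or.inl (hφ (((hab e he).resolve_right (hb e he)).trans h0.symm))⟩
  · by_cases ha : ∃ e ∈ l, φ (F e) = a
    · obtain ⟨e1, he1, hae⟩ := ha
      exact ⟨F e1, F e0, fun e he =>
        (hab e he).imp (fun h => hφ (h.trans hae.symm)) (fun h => hφ (h.trans h0.symm))⟩
    · push_neg at ha
      exact ⟨F e0, F e0, fun e he =>
        Or.inl (hφ (((hab e he).resolve_left (ha e he)).trans h0.symm))⟩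

lemma isStarEdgeColoring_comp (G : SimpleGraph V) (c : Sym2 V → α) (φ : α → β)
    (hφ : Function.Injective φ) (hc : IsStarEdgeColoring G c) :
    IsStarEdgeColoring G (φ ∘ c) := by
  obtain ⟨h1, h2, h3⟩ := hc
  refine ⟨fun e₁ m₁ e₂ m₂ hne hsh heq => h1 e₁ m₁ e₂ m₂ hne hsh (hφ heq), ?_, ?_⟩
  · rintro u v p hp hlen ⟨a, b, hab⟩
    have hl : p.edges ≠ [] := by
      intro h
      have := p.length_edges
      rw [h] at this
      simp [hlen] at this
    exact h2 u v p hp hlen (pullback_two_colors φ hφ c p.edges hl a b hab)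
  · rintro u p hp hlen ⟨a, b, hab⟩
    have hl : p.edges ≠ [] := by
      intro h
      have := p.length_edges
      rw [h] at this
      simp [hlen] at this
    exact h3 u p hp hlen (pullback_two_colors φ hφ c p.edges hl a b hab)

lemma two_color_alt (a b x1 x2 x3 x4 : α)
    (m1 : x1 = a ∨ x1 = b) (m2 : x2 = a ∨ x2 = b) (m3 : x3 = a ∨ x3 = b)
    (m4 : x4 = a ∨ x4 = b) (n12 : x1 ≠ x2) (n23 : x2 ≠ x3) (n34 : x3 ≠ x4) :
    x1 = x3 ∧ x2 = x4 := by
  rcases m1 with h1|h1 <;> rcases m2 with h2|h2 <;> rcases m3 with h3|h3 <;>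
    rcases m4 with h4|h4 <;> simp_all

lemma top_path4 (x0 x1 x2 x3 x4 : α)
    (h01 : x0≠x1) (h02 : x0≠x2) (h03 : x0≠x3) (h04 : x0≠x4)
    (h12 : x1≠x2) (h13 : x1≠x3) (h14 : x1≠x4)
    (h23 : x2≠x3) (h24 : x2≠x4) (h34 : x3≠x4) :
    ∃ p : (⊤ : SimpleGraph α).Walk x0 x4, p.IsPath ∧ p.length = 4 ∧
      p.edges = [s(x0,x1), s(x1,x2), s(x2,x3), s(x3,x4)] := by
  refine ⟨.cons (by simpa using h01) (.cons (by simpa using h12) (.cons (by simpa using h23)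
    (.cons (by simpa using h34) .nil))), ?_, by simp, by simp⟩
  rw [SimpleGraph.Walk.isPath_def]
  simp [h01,h02,h03,h04,h12,h13,h14,h23,h24,h34]

lemma top_cycle4 (x0 x1 x2 x3 : α)
    (h01 : x0≠x1) (h02 : x0≠x2) (h03 : x0≠x3)
    (h12 : x1≠x2) (h13 : x1≠x3) (h23 : x2≠x3) :
    ∃ p : (⊤ : SimpleGraph α).Walk x0 x0, p.IsCycle ∧ p.length = 4 ∧
      p.edges = [s(x0,x1), s(x1,x2), s(x2,x3), s(x3,x0)] := by
  refine ⟨.cons (by simpa using h01) (.cons (by simpa using h12) (.cons (by simpa using h23)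
    (.cons (by simpa using h03.symm) .nil))), ?_, by simp, by simp⟩
  constructor
  · constructor
    · rw [SimpleGraph.Walk.isTrail_def]
      simp [Sym2.eq_iff, h01, h02, h03, h12, h13, h23,
        h01.symm, h02.symm, h03.symm, h12.symm, h13.symm, h23.symm]
    · simp
  · simp [h12, h13, h23, List.nodup_cons, h01.symm, h02.symm, h03.symm]

end Aux

/-- combining a proper (Δ+1)-vertex-coloring f, a star k-edge-coloring
c of K_{Δ+1}, and a coloring g that properly colors the square of the line graph of
each G[V_i ∪ V_j] with m colors yields a star edge-coloring h(uv) = (c(f(u)f(v)), g(uv))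
of G, whence χ'_s(G) ≤ k·m. -/
theorem starChromaticIndex_le_of_frugal_combination {V : Type*} [Fintype V]
    (G : SimpleGraph V) [DecidableRel G.Adj] (Δ k m : ℕ)
    (hΔ : ∀ v, G.degree v ≤ Δ)
    (f : V → Fin (Δ + 1)) (hf : ∀ u v, G.Adj u v → f u ≠ f v)
    (c : Sym2 (Fin (Δ + 1)) → Fin k)
    (hc : IsStarEdgeColoring (⊤ : SimpleGraph (Fin (Δ + 1))) c)
    (g : Sym2 V → Fin m)
    (hg : ∀ i j : Fin (Δ + 1), ∀ e₁ e₂ : Sym2 V,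
      e₁ ∈ G.edgeSet → e₂ ∈ G.edgeSet →
      (∀ v ∈ e₁, f v = i ∨ f v = j) → (∀ v ∈ e₂, f v = i ∨ f v = j) →
      e₁ ≠ e₂ →
      ((∃ v, v ∈ e₁ ∧ v ∈ e₂) ∨
        ∃ e₃ ∈ G.edgeSet, (∀ v ∈ e₃, f v = i ∨ f v = j) ∧
          (∃ v, v ∈ e₁ ∧ v ∈ e₃) ∧ (∃ v, v ∈ e₂ ∧ v ∈ e₃)) →
      g e₁ ≠ g e₂) :
    IsStarEdgeColoring G (fun e => (c (Sym2.map f e), g e)) ∧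
      starChromaticIndex G ≤ k * m := by
  set h : Sym2 V → Fin k × Fin m := fun e => (c (Sym2.map f e), g e) with hh
  -- properness of h
  have hproper : ∀ e₁ ∈ G.edgeSet, ∀ e₂ ∈ G.edgeSet, e₁ ≠ e₂ →
      (∃ v, v ∈ e₁ ∧ v ∈ e₂) → h e₁ ≠ h e₂ := by
    rintro e₁ m₁ e₂ m₂ hne ⟨v, hv₁, hv₂⟩
    obtain ⟨u₁, rfl⟩ := Sym2.mem_iff_exists.mp hv₁
    obtain ⟨u₂, rfl⟩ := Sym2.mem_iff_exists.mp hv₂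
    rw [SimpleGraph.mem_edgeSet] at m₁ m₂
    intro heq
    rw [hh, Prod.mk.injEq] at heq
    obtain ⟨hceq, hgeq⟩ := heq
    by_cases hfu : f u₁ = f u₂
    · refine hg (f v) (f u₁) s(v, u₁) s(v, u₂) (by simpa using m₁) (by simpa using m₂)
        ?_ ?_ hne (Or.inl ⟨v, by simp, by simp⟩) hgeq
      · intro w hw
        rcases Sym2.mem_iff.mp hw with rfl | rfl
        · exact Or.inl rfl
        · exact Or.inr rfl
      · intro w hw
        rcases Sym2.mem_iff.mp hw with rfl | rfl
        · exact Or.inl rfl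
        · exact Or.inr hfu.symm
    · have hne' : s(f v, f u₁) ≠ s(f v, f u₂) := by
        intro hEq
        rcases Sym2.eq_iff.mp hEq with ⟨_, h2⟩ | ⟨h1, h2⟩
        · exact hfu h2
        · exact hf v u₁ m₁ h2.symm
      refine hc.1 s(f v, f u₁) (by simpa using hf v u₁ m₁) s(f v, f u₂)
        (by simpa using hf v u₂ m₂) hne' ⟨f v, by simp, by simp⟩ ?_
      simpa [Sym2.map_pair_eq] using hceq
  -- core argument: a bicolored-in-h 4-edge walk with h e1 = h e3, h e2 = h e4 is impossible
  have core : ∀ v0 v1 v2 v3 v4 : V, G.Adj v0 v1 → G.Adj v1 v2 → G.Adj v2 v3 → G.Adj v3 v4 →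
      v0 ≠ v2 → h s(v0, v1) = h s(v2, v3) → h s(v1, v2) = h s(v3, v4) → False := by
    intro v0 v1 v2 v3 v4 a01 a12 a23 a34 d02 eq13 eq24
    rw [hh] at eq13 eq24
    simp only [Sym2.map_pair_eq, Prod.mk.injEq] at eq13 eq24
    obtain ⟨cE13, gE13⟩ := eq13
    obtain ⟨cE24, gE24⟩ := eq24
    have n01 := hf _ _ a01
    have n12 := hf _ _ a12
    have n23 := hf _ _ a23
    have n34 := hf _ _ a34
    by_cases hαβ : c s(f v0, f v1) = c s(f v1, f v2)
    · -- Case B: all four f-edges coincide, use hg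
      have e12 : s(f v0, f v1) = s(f v1, f v2) := by
        by_contra hne
        exact hc.1 _ (by simpa using n01) _ (by simpa using n12) hne
          ⟨f v1, by simp, by simp⟩ hαβ
      have hx02 : f v0 = f v2 := by
        rcases Sym2.eq_iff.mp e12 with ⟨h1, _⟩ | ⟨h1, _⟩
        · exact absurd h1 n01
        · exact h1
      have e23 : s(f v1, f v2) = s(f v2, f v3) := by
        by_contra hne
        exact hc.1 _ (by simpa using n12) _ (by simpa using n23) hne
          ⟨f v2, by simp, by simp⟩ (hαβ.symm.trans cE13)
      have hx13 : f v1 = f v3 := by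
        rcases Sym2.eq_iff.mp e23 with ⟨h1, _⟩ | ⟨h1, _⟩
        · exact absurd h1 n12
        · exact h1
      have hne13 : s(v0, v1) ≠ s(v2, v3) := by
        intro hEq
        rcases Sym2.eq_iff.mp hEq with ⟨h1, _⟩ | ⟨_, h2⟩
        · exact d02 h1
        · exact a12.ne h2
      refine hg (f v0) (f v1) s(v0, v1) s(v2, v3) (by simpa using a01) (by simpa using a23)
        ?_ ?_ hne13 (Or.inr ⟨s(v1, v2), by simpa using a12, ?_,
          ⟨v1, by simp, by simp⟩, ⟨v2, by simp, by simp⟩⟩) gE13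
      · intro w hw
        rcases Sym2.mem_iff.mp hw with rfl | rfl
        · exact Or.inl rfl
        · exact Or.inr rfl
      · intro w hw
        rcases Sym2.mem_iff.mp hw with rfl | rfl
        · exact Or.inl hx02.symm
        · exact Or.inr hx13.symm
      · intro w hw
        rcases Sym2.mem_iff.mp hw with rfl | rfl
        · exact Or.inr rfl
        · exact Or.inl hx02.symm
    · -- Case A: image walk is a path or cycle in K
      have n02 : f v0 ≠ f v2 := by
        intro hEq
        apply hαβ
        apply congrArg c
        rw [← hEq, Sym2.eq_swap]
      have n13 : f v1 ≠ f v3 := by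
        intro hEq
        apply hαβ
        rw [cE13, ← hEq]
        exact congrArg c (Sym2.eq_swap)
      have n24 : f v2 ≠ f v4 := by
        intro hEq
        apply hαβ
        rw [cE13, cE24, ← hEq]
        exact congrArg c (Sym2.eq_swap)
      have n03 : f v0 ≠ f v3 := by
        intro hEq
        have hne' : s(f v0, f v1) ≠ s(f v2, f v3) := by
          intro hEq2
          rcases Sym2.eq_iff.mp hEq2 with ⟨_, h2⟩ | ⟨_, h2⟩
          · exact n01 (hEq.trans h2.symm)
          · exact n12 h2
        exact hc.1 _ (by simpa using n01) _ (by simpa using n23) hne'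
          ⟨f v0, by simp, by rw [Sym2.mem_iff]; exact Or.inr hEq⟩ cE13
      have n14 : f v1 ≠ f v4 := by
        intro hEq
        have hne' : s(f v1, f v2) ≠ s(f v3, f v4) := by
          intro hEq2
          rcases Sym2.eq_iff.mp hEq2 with ⟨h1, _⟩ | ⟨_, h2⟩
          · exact n13 h1
          · exact n23 h2
        exact hc.1 _ (by simpa using n12) _ (by simpa using n34) hne'
          ⟨f v1, by simp, by rw [Sym2.mem_iff]; exact Or.inr hEq⟩ cE24
      by_cases h04 : f v0 = f v4
      · -- 4-cycle in K
        obtain ⟨p, pc, plen, pedges⟩ := top_cycle4 (f v0) (f v1) (f v2) (f v3)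
          n01 n02 n03 n12 n13 n23
        refine hc.2.2 (f v0) p pc plen ⟨c s(f v0, f v1), c s(f v1, f v2), ?_⟩
        intro e he
        rw [pedges] at he
        simp only [List.mem_cons, List.not_mem_nil, or_false] at he
        rcases he with rfl | rfl | rfl | rfl
        · exact Or.inl rfl
        · exact Or.inr rfl
        · exact Or.inl cE13.symm
        · refine Or.inr ?_
          rw [h04]
          exact cE24.symm
      · -- 4-path in K
        obtain ⟨p, pp, plen, pedges⟩ := top_path4 (f v0) (f v1) (f v2) (f v3) (f v4)
          n01 n02 n03 h04 n12 n13 n14 n23 n24 n34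
        refine hc.2.1 (f v0) (f v4) p pp plen ⟨c s(f v0, f v1), c s(f v1, f v2), ?_⟩
        intro e he
        rw [pedges] at he
        simp only [List.mem_cons, List.not_mem_nil, or_false] at he
        rcases he with rfl | rfl | rfl | rfl
        · exact Or.inl rfl
        · exact Or.inr rfl
        · exact Or.inl cE13.symm
        · exact Or.inr cE24.symm
  -- no bicolored 4-path
  have hpath : ∀ (u v : V) (p : G.Walk u v), p.IsPath → p.length = 4 →
      ¬ ∃ a b : Fin k × Fin m, ∀ e ∈ p.edges, h e = a ∨ h e = b := by
    intro u v p hp hlen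
    cases p with
    | nil => simp at hlen
    | cons a01 q =>
    cases q with
    | nil => simp at hlen
    | cons a12 q =>
    cases q with
    | nil => simp at hlen
    | cons a23 q =>
    cases q with
    | nil => simp at hlen
    | cons a34 q =>
    cases q with
    | cons a45 q => simp [SimpleGraph.Walk.length_cons] at hlen
    | nil =>
    rename_i v1 v2 v3
    rw [SimpleGraph.Walk.isPath_def] at hp
    simp only [SimpleGraph.Walk.support_cons, SimpleGraph.Walk.support_nil, List.nodup_cons,
      List.mem_cons, List.mem_singleton, List.not_mem_nil] at hp
    have d02 : u ≠ v2 := by tauto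
    have d03 : u ≠ v3 := by tauto
    have d13 : v1 ≠ v3 := by tauto
    have d14 : v1 ≠ v := by tauto
    have d24 : v2 ≠ v := by tauto
    rintro ⟨a, b, hab⟩
    simp only [SimpleGraph.Walk.edges_cons, SimpleGraph.Walk.edges_nil, List.mem_cons,
      List.not_mem_nil, or_false] at hab
    have m1 := hab _ (Or.inl rfl)
    have m2 := hab _ (Or.inr (Or.inl rfl))
    have m3 := hab _ (Or.inr (Or.inr (Or.inl rfl)))
    have m4 := hab _ (Or.inr (Or.inr (Or.inr rfl)))
    have ne12 : h s(u, v1) ≠ h s(v1, v2) := by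
      refine hproper _ (by simpa using a01) _ (by simpa using a12) ?_ ⟨v1, by simp, by simp⟩
      intro hEq
      rcases Sym2.eq_iff.mp hEq with ⟨h1, _⟩ | ⟨h1, _⟩
      · exact a01.ne h1
      · exact d02 h1
    have ne23 : h s(v1, v2) ≠ h s(v2, v3) := by
      refine hproper _ (by simpa using a12) _ (by simpa using a23) ?_ ⟨v2, by simp, by simp⟩
      intro hEq
      rcases Sym2.eq_iff.mp hEq with ⟨h1, _⟩ | ⟨h1, _⟩
      · exact a12.ne h1
      · exact d13 h1
    have ne34 : h s(v2, v3) ≠ h s(v3, v) := by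
      refine hproper _ (by simpa using a23) _ (by simpa using a34) ?_ ⟨v3, by simp, by simp⟩
      intro hEq
      rcases Sym2.eq_iff.mp hEq with ⟨h1, _⟩ | ⟨h1, _⟩
      · exact a23.ne h1
      · exact d24 h1
    obtain ⟨eq13, eq24⟩ := two_color_alt a b _ _ _ _ m1 m2 m3 m4 ne12 ne23 ne34
    exact core u v1 v2 v3 v a01 a12 a23 a34 d02 eq13 eq24
  -- no bicolored 4-cycle
  have hcycle : ∀ (u : V) (p : G.Walk u u), p.IsCycle → p.length = 4 →
      ¬ ∃ a b : Fin k × Fin m, ∀ e ∈ p.edges, h e = a ∨ h e = b := by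
    intro u p hp hlen
    cases p with
    | nil => simp at hlen
    | cons a01 q =>
    cases q with
    | nil => simp at hlen
    | cons a12 q =>
    cases q with
    | nil => simp at hlen
    | cons a23 q =>
    cases q with
    | nil => simp at hlen
    | cons a34 q =>
    cases q with
    | cons a45 q => simp [SimpleGraph.Walk.length_cons] at hlen
    | nil =>
    rename_i v1 v2 v3
    have hnd := hp.2
    simp only [SimpleGraph.Walk.support_cons, SimpleGraph.Walk.support_nil, List.tail_cons,
      List.nodup_cons, List.mem_cons, List.mem_singleton, List.not_mem_nil] at hnd
    have d02 : u ≠ v2 := by tauto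
    have d03 : u ≠ v3 := by tauto
    have d13 : v1 ≠ v3 := by tauto
    rintro ⟨a, b, hab⟩
    simp only [SimpleGraph.Walk.edges_cons, SimpleGraph.Walk.edges_nil, List.mem_cons,
      List.not_mem_nil, or_false] at hab
    have m1 := hab _ (Or.inl rfl)
    have m2 := hab _ (Or.inr (Or.inl rfl))
    have m3 := hab _ (Or.inr (Or.inr (Or.inl rfl)))
    have m4 := hab _ (Or.inr (Or.inr (Or.inr rfl)))
    have ne12 : h s(u, v1) ≠ h s(v1, v2) := by
      refine hproper _ (by simpa using a01) _ (by simpa using a12) ?_ ⟨v1, by simp, by simp⟩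
      intro hEq
      rcases Sym2.eq_iff.mp hEq with ⟨h1, _⟩ | ⟨h1, _⟩
      · exact a01.ne h1
      · exact d02 h1
    have ne23 : h s(v1, v2) ≠ h s(v2, v3) := by
      refine hproper _ (by simpa using a12) _ (by simpa using a23) ?_ ⟨v2, by simp, by simp⟩
      intro hEq
      rcases Sym2.eq_iff.mp hEq with ⟨h1, _⟩ | ⟨h1, _⟩
      · exact a12.ne h1
      · exact d13 h1
    have ne34 : h s(v2, v3) ≠ h s(v3, u) := by
      refine hproper _ (by simpa using a23) _ (by simpa using a34) ?_ ⟨v3, by simp, by simp⟩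
      intro hEq
      rcases Sym2.eq_iff.mp hEq with ⟨h1, _⟩ | ⟨h1, _⟩
      · exact a23.ne h1
      · exact d02 h1.symm
    obtain ⟨eq13, eq24⟩ := two_color_alt a b _ _ _ _ m1 m2 m3 m4 ne12 ne23 ne34
    exact core u v1 v2 v3 u a01 a12 a23 a34 d02 eq13 eq24
  have hstar : IsStarEdgeColoring G h := ⟨hproper, hpath, hcycle⟩
  refine ⟨hstar, ?_⟩
  apply Nat.sInf_le
  exact ⟨fun e => finProdFinEquiv (h e),
    isStarEdgeColoring_comp G h (⇑finProdFinEquiv) finProdFinEquiv.injective hstar⟩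
end
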